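/- arXiv:1512.08555 — 5 statements merged into one kernel-verified Lean document; each statement's English description precedes it below -/
import Mathlib

section
/- Let G be a finite simple graph with n vertices, each vertex u assigned a priority ρ(u) ∈ {1,…,n}, let i ∈ {1,…,n}, and let M be a matching of G with maximum (i−1)-score. If p = u_0,…,u_t is a path in G whose edges alternate between edges not in M and edges in M (first edge not in M), with u_0 unmatched by M, ρ(u_0) = i, and u_t also unmatched by M, then ρ(u_t) ≥ i. -/
variable {V : Type*}

/-- `M` is a matching of the simple graph `G`: a set of edges of `G`,
no two of which share an endpoint. -/
def IsMatching (G : SimpleGraph V) (M : Finset (Sym2 V)) : Prop :=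
  (↑M : Set (Sym2 V)) ⊆ G.edgeSet ∧
    ∀ e ∈ M, ∀ f ∈ M, e ≠ f → ∀ v : V, v ∈ e → v ∉ f

/-- The matching `M` matches the vertex `v`. -/
def Matches (M : Finset (Sym2 V)) (v : V) : Prop :=
  ∃ e ∈ M, v ∈ e

/-- The number of vertices of `S` matched by `M`. -/
noncomputable def matchCount (S : Set V) (M : Finset (Sym2 V)) : ℕ :=
  Set.ncard {v | v ∈ S ∧ Matches M v}

/-- The `i`-score of `M`: the tuple `(c_1, …, c_i)` where `c_j` is the number of
vertices of priority `j` matched by `M`. -/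
noncomputable def score (ρ : V → ℕ) (i : ℕ) (M : Finset (Sym2 V)) : List ℕ :=
  (List.range i).map fun j => Set.ncard {v | ρ v = j + 1 ∧ Matches M v}

/-- Lexicographically strictly smaller score. -/
def ScoreLT (s t : List ℕ) : Prop :=
  List.Lex (· < ·) s t

/-- `M` has maximum `i`-score: no matching of `G` has a lexicographically
larger `i`-score. -/
def HasMaxScore (G : SimpleGraph V) (ρ : V → ℕ) (i : ℕ) (M : Finset (Sym2 V)) : Prop :=
  ∀ M' : Finset (Sym2 V), IsMatching G M' → ¬ ScoreLT (score ρ i M) (score ρ i M')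

/-- The edges of the walk `p` alternate between edges not in `M` and edges in `M`,
with the first edge not in `M`: the `k`-th edge (0-indexed) lies in `M` iff `k` is odd. -/
def Alternating {G : SimpleGraph V} (M : Finset (Sym2 V)) {a b : V} (p : G.Walk a b) : Prop :=
  ∀ (k : ℕ) (h : k < p.edges.length), p.edges.get ⟨k, h⟩ ∈ M ↔ k % 2 = 1

/-- `p` is an `i`-augmenting path with respect to `M`: a (nontrivial) path whose edges
alternate, starting with a non-matching edge, whose first vertex is unmatched of
priority `i`, and whose last vertex, if matched, has priority `> i`. -/
def IsAugPath (G : SimpleGraph V) (M : Finset (Sym2 V)) (ρ : V → ℕ) (i : ℕ)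
    {a b : V} (p : G.Walk a b) : Prop :=
  p.IsPath ∧ 0 < p.length ∧ Alternating M p ∧
    ¬ Matches M a ∧ ρ a = i ∧ (Matches M b → i < ρ b)

/-- `p` is an augmenting path with respect to `M` and the vertex set `S`
(the two-priority case). -/
def IsAugPathS (G : SimpleGraph V) (M : Finset (Sym2 V)) (S : Set V)
    {a b : V} (p : G.Walk a b) : Prop :=
  p.IsPath ∧ 0 < p.length ∧ Alternating M p ∧
    ¬ Matches M a ∧ a ∈ S ∧ (Matches M b → b ∉ S)

section AuxAP

variable {G : SimpleGraph V}

lemma aux_edges_get_eq {a b : V} (p : G.Walk a b) (k : ℕ) (h : k < p.edges.length) :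
    p.edges.get ⟨k, h⟩ = s(p.getVert k, p.getVert (k + 1)) := by
  induction p generalizing k with
  | nil => simp at h
  | cons hadj q ih =>
    cases k with
    | zero =>
      simp [SimpleGraph.Walk.edges_cons, SimpleGraph.Walk.getVert_zero,
        SimpleGraph.Walk.getVert_cons_succ]
    | succ n =>
      have h' : n < q.edges.length := by
        simpa [SimpleGraph.Walk.edges_cons] using h
      simpa [SimpleGraph.Walk.edges_cons, SimpleGraph.Walk.getVert_cons_succ] using ih n h'

lemma aux_getVert_mem_support {a b : V} (p : G.Walk a b) (k : ℕ) :
    p.getVert k ∈ p.support := by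
  induction p generalizing k with
  | nil => simp [SimpleGraph.Walk.getVert]
  | cons hadj q ih =>
    cases k with
    | zero => simp [SimpleGraph.Walk.getVert_zero]
    | succ n =>
      rw [SimpleGraph.Walk.getVert_cons_succ]
      simp only [SimpleGraph.Walk.support_cons, List.mem_cons]
      exact Or.inr (ih n)

lemma aux_getVert_injOn {a b : V} {p : G.Walk a b} (hp : p.IsPath) :
    ∀ k, k ≤ p.length → ∀ l, l ≤ p.length → p.getVert k = p.getVert l → k = l := by
  induction p with
  | nil => intro k hk l hl _; simp at hk hl; omega
  | cons hadj q ih =>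
    intro k hk l hl hkl
    obtain ⟨hq, hu⟩ := (SimpleGraph.Walk.cons_isPath_iff _ _).mp hp
    cases k with
    | zero =>
      cases l with
      | zero => rfl
      | succ m =>
        rw [SimpleGraph.Walk.getVert_zero, SimpleGraph.Walk.getVert_cons_succ] at hkl
        exact absurd (hkl ▸ aux_getVert_mem_support q m) hu
    | succ n =>
      cases l with
      | zero =>
        rw [SimpleGraph.Walk.getVert_zero, SimpleGraph.Walk.getVert_cons_succ] at hkl
        exact absurd (hkl ▸ aux_getVert_mem_support q n) hu
      | succ m =>
        rw [SimpleGraph.Walk.getVert_cons_succ, SimpleGraph.Walk.getVert_cons_succ] at hkl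
        have := ih hq n (by simpa [Nat.succ_le_succ_iff] using hk) m
          (by simpa [Nat.succ_le_succ_iff] using hl) hkl
        omega

lemma aux_lex_of_pointwise {s : List ℕ} : ∀ {t : List ℕ}, s.length = t.length →
    (∀ k (h1 : k < s.length) (h2 : k < t.length), s.get ⟨k, h1⟩ ≤ t.get ⟨k, h2⟩) →
    (∃ k, ∃ (h1 : k < s.length), ∃ (h2 : k < t.length), s.get ⟨k, h1⟩ < t.get ⟨k, h2⟩) →
    List.Lex (· < ·) s t := by
  induction s with
  | nil => intro t _ _ hlt; obtain ⟨k, h1, _, _⟩ := hlt; simp at h1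
  | cons x s ih =>
    intro t hlen hle hlt
    cases t with
    | nil => simp at hlen
    | cons y t =>
      have h0 : x ≤ y := hle 0 (by simp) (by simp)
      rcases lt_or_eq_of_le h0 with h | h
      · exact List.Lex.rel h
      · subst h
        apply List.Lex.cons
        apply ih (by simpa using hlen)
        · intro k h1 h2
          have h1' : k + 1 < (x :: s).length := by simp; omega
          have h2' : k + 1 < (x :: t).length := by simp; omega
          simpa using hle (k + 1) h1' h2'
        · obtain ⟨k, h1, h2, hk⟩ := hlt
          match k with
          | 0 => exact absurd hk (by simp)
          | n + 1 =>
            have h1' : n < s.length := by simp at h1; omega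
            have h2' : n < t.length := by simp at h2; omega
            exact ⟨n, h1', h2', by simpa using hk⟩

end AuxAP

/-- for a matching of maximum `(i-1)`-score, the unmatched far endpoint
of an alternating path starting at an unmatched priority-`i` vertex has priority `≥ i`. -/
theorem alternating_path_unmatched_endpoint_priority_ge
    {V : Type*} [Fintype V] (G : SimpleGraph V) (ρ : V → ℕ)
    (hρ : ∀ v, 1 ≤ ρ v ∧ ρ v ≤ Fintype.card V)
    (i : ℕ) (hi1 : 1 ≤ i) (hin : i ≤ Fintype.card V)
    (M : Finset (Sym2 V)) (hM : IsMatching G M)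
    (hmax : HasMaxScore G ρ (i - 1) M)
    {a b : V} (p : G.Walk a b) (hpath : p.IsPath) (halt : Alternating M p)
    (ha : ¬ Matches M a) (hρa : ρ a = i) (hb : ¬ Matches M b) :
    i ≤ ρ b := by
  classical
  by_contra hcon
  push_neg at hcon
  have hρb1 : 1 ≤ ρ b := (hρ b).1
  obtain ⟨hMsub, hMdisj⟩ := hM
  set t := p.length with ht
  have hgb : p.getVert t = b := by rw [ht]; exact p.getVert_length
  have hga : p.getVert 0 = a := p.getVert_zero
  -- t ≠ 0
  have ht0 : 0 < t := by
    rcases Nat.eq_zero_or_pos t with h0 | h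
    · exfalso
      have hba : b = a := by rw [← hgb, h0, hga]
      rw [hba, hρa] at hcon
      omega
    · exact h
  have hlenE : p.edges.length = t := by rw [ht]; exact p.length_edges
  have hmemE : ∀ k, k < t → s(p.getVert k, p.getVert (k + 1)) ∈ p.edges := by
    intro k hk
    have hk' : k < p.edges.length := by omega
    rw [← aux_edges_get_eq p k hk']
    exact List.get_mem _ _
  have hEM : ∀ k, k < t → (s(p.getVert k, p.getVert (k + 1)) ∈ M ↔ k % 2 = 1) := by
    intro k hk
    have hk' : k < p.edges.length := by omega
    rw [← aux_edges_get_eq p k hk']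
    exact halt k hk'
  have hEdec : ∀ e ∈ p.edges, ∃ k, k < t ∧ e = s(p.getVert k, p.getVert (k + 1)) := by
    intro e he
    obtain ⟨⟨k, hk⟩, hek⟩ := List.mem_iff_get.mp he
    exact ⟨k, by omega, by rw [← hek, aux_edges_get_eq]⟩
  -- t is odd
  have htodd : t % 2 = 1 := by
    by_contra hpar
    have h1 : (t - 1) % 2 = 1 := by omega
    have hm := (hEM (t - 1) (by omega)).mpr h1
    apply hb
    refine ⟨_, hm, ?_⟩
    have h2 : t - 1 + 1 = t := by omega
    rw [h2, hgb]
    exact Sym2.mem_mk_right _ _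
  have hinj : ∀ k, k ≤ t → ∀ l, l ≤ t → p.getVert k = p.getVert l → k = l := by
    rw [ht]; exact aux_getVert_injOn hpath
  -- vertices of path edges are path vertices
  have hvertE : ∀ e ∈ p.edges, ∀ v, v ∈ e → ∃ k, k ≤ t ∧ v = p.getVert k := by
    intro e he v hv
    obtain ⟨k, hk, rfl⟩ := hEdec e he
    rcases Sym2.mem_iff.mp hv with h | h
    · exact ⟨k, by omega, h⟩
    · exact ⟨k + 1, by omega, h⟩
  -- M-edges touching the path are path edges
  have hL1 : ∀ e ∈ M, ∀ k, k ≤ t → p.getVert k ∈ e → e ∈ p.edges := by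
    intro e he k hk hve
    rcases Nat.eq_zero_or_pos k with rfl | hk0
    · rw [hga] at hve
      exact absurd ⟨e, he, hve⟩ ha
    rcases eq_or_lt_of_le hk with rfl | hkt
    · rw [hgb] at hve
      exact absurd ⟨e, he, hve⟩ hb
    by_cases hpar : k % 2 = 1
    · have hem := (hEM k hkt).mpr hpar
      have heq : e = s(p.getVert k, p.getVert (k + 1)) := by
        by_contra hne
        exact hMdisj e he _ hem hne _ hve (Sym2.mem_mk_left _ _)
      rw [heq]; exact hmemE k hkt
    · have hpar' : (k - 1) % 2 = 1 := by omega
      have hem := (hEM (k - 1) (by omega)).mpr hpar'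
      have hkk : k - 1 + 1 = k := by omega
      have hmem2 : p.getVert k ∈ s(p.getVert (k - 1), p.getVert (k - 1 + 1)) := by
        rw [hkk]; exact Sym2.mem_mk_right _ _
      have heq : e = s(p.getVert (k - 1), p.getVert (k - 1 + 1)) := by
        by_contra hne
        exact hMdisj e he _ hem hne _ hve hmem2
      rw [heq]; exact hmemE (k - 1) (by omega)
  -- the augmented matching
  set M' : Finset (Sym2 V) := (M \ p.edges.toFinset) ∪ (p.edges.toFinset \ M) with hM'def
  have hM'mem : ∀ e, e ∈ M' ↔ (e ∈ M ∧ e ∉ p.edges) ∨ (e ∈ p.edges ∧ e ∉ M) := by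
    intro e
    simp [hM'def, Finset.mem_union, Finset.mem_sdiff, List.mem_toFinset]
  have hM'match : IsMatching G M' := by
    constructor
    · intro e he
      rcases (hM'mem e).mp he with ⟨h1, _⟩ | ⟨h1, _⟩
      · exact hMsub h1
      · exact p.edges_subset_edgeSet h1
    · intro e he f hf hef v hve hvf
      rcases (hM'mem e).mp he with ⟨he1, he2⟩ | ⟨he1, he2⟩ <;>
        rcases (hM'mem f).mp hf with ⟨hf1, hf2⟩ | ⟨hf1, hf2⟩
      · exact hMdisj e he1 f hf1 hef v hve hvf
      · obtain ⟨k, hk, rfl⟩ := hvertE f hf1 v hvf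
        exact he2 (hL1 e he1 k hk hve)
      · obtain ⟨k, hk, rfl⟩ := hvertE e he1 v hve
        exact hf2 (hL1 f hf1 k hk hvf)
      · obtain ⟨k, hk, rfl⟩ := hEdec e he1
        obtain ⟨l, hl, rfl⟩ := hEdec f hf1
        have hke : k % 2 = 0 := by
          have h := hEM k hk
          have : ¬ k % 2 = 1 := fun hh => he2 (h.mpr hh)
          omega
        have hle' : l % 2 = 0 := by
          have h := hEM l hl
          have : ¬ l % 2 = 1 := fun hh => hf2 (h.mpr hh)
          omega
        rcases Sym2.mem_iff.mp hve with h1 | h1 <;> rcases Sym2.mem_iff.mp hvf with h2 | h2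
        · have hkl := hinj k (by omega) l (by omega) (h1.symm.trans h2)
          subst hkl; exact hef rfl
        · have hkl := hinj k (by omega) (l + 1) (by omega) (h1.symm.trans h2)
          omega
        · have hkl := hinj (k + 1) (by omega) l (by omega) (h1.symm.trans h2)
          omega
        · have hkl := hinj (k + 1) (by omega) (l + 1) (by omega) (h1.symm.trans h2)
          have hkl' : k = l := by omega
          subst hkl'; exact hef rfl
  -- every path vertex is matched by M'
  have hM'path : ∀ k, k ≤ t → Matches M' (p.getVert k) := by
    intro k hk
    by_cases hpar : k % 2 = 1
    · have hlt : k - 1 < t := by omega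
      have hnot : s(p.getVert (k - 1), p.getVert (k - 1 + 1)) ∉ M := by
        intro hh
        have := (hEM _ hlt).mp hh
        omega
      refine ⟨_, (hM'mem _).mpr (Or.inr ⟨hmemE _ hlt, hnot⟩), ?_⟩
      have h2 : k - 1 + 1 = k := by omega
      rw [h2]
      exact Sym2.mem_mk_right _ _
    · have hlt : k < t := by omega
      have hnot : s(p.getVert k, p.getVert (k + 1)) ∉ M := by
        intro hh
        have := (hEM _ hlt).mp hh
        omega
      exact ⟨_, (hM'mem _).mpr (Or.inr ⟨hmemE _ hlt, hnot⟩), Sym2.mem_mk_left _ _⟩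
  -- M' matches everything M matches
  have hMM' : ∀ v, Matches M v → Matches M' v := by
    rintro v ⟨e, he, hve⟩
    by_cases heE : e ∈ p.edges
    · obtain ⟨k, hk, rfl⟩ := hvertE e heE v hve
      exact hM'path k hk
    · exact ⟨e, (hM'mem e).mpr (Or.inl ⟨he, heE⟩), hve⟩
  have hM'b : Matches M' b := by
    have := hM'path t le_rfl
    rwa [hgb] at this
  -- score comparison
  have hsub : ∀ j : ℕ, {v | ρ v = j ∧ Matches M v} ⊆ {v | ρ v = j ∧ Matches M' v} := by
    rintro j v ⟨h1, h2⟩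
    exact ⟨h1, hMM' v h2⟩
  have hcard_le : ∀ j : ℕ,
      Set.ncard {v | ρ v = j ∧ Matches M v} ≤ Set.ncard {v | ρ v = j ∧ Matches M' v} :=
    fun j => Set.ncard_le_ncard (hsub j) (Set.toFinite _)
  have hcard_lt : Set.ncard {v | ρ v = ρ b ∧ Matches M v} <
      Set.ncard {v | ρ v = ρ b ∧ Matches M' v} := by
    apply Set.ncard_lt_ncard _ (Set.toFinite _)
    rw [Set.ssubset_iff_of_subset (hsub (ρ b))]
    exact ⟨b, ⟨rfl, hM'b⟩, fun h => hb h.2⟩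
  apply hmax M' hM'match
  unfold ScoreLT score
  apply aux_lex_of_pointwise
  · simp
  · intro k h1 h2
    simp only [List.get_eq_getElem, List.getElem_map, List.getElem_range]
    exact hcard_le (k + 1)
  · have hlen1 : ρ b - 1 <
        ((List.range (i - 1)).map fun j => Set.ncard {v | ρ v = j + 1 ∧ Matches M v}).length := by
      simp; omega
    have hlen2 : ρ b - 1 <
        ((List.range (i - 1)).map fun j => Set.ncard {v | ρ v = j + 1 ∧ Matches M' v}).length := by
      simp; omega
    refine ⟨ρ b - 1, hlen1, hlen2, ?_⟩
    simp only [List.get_eq_getElem, List.getElem_map, List.getElem_range]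
    have h2 : ρ b - 1 + 1 = ρ b := by omega
    rw [h2]
    exact hcard_lt
end

section
/- Let G be a finite simple graph with n vertices, each vertex u assigned a priority ρ(u) ∈ {1,…,n}, let i ∈ {1,…,n}, and let M be a matching of G with maximum (i−1)-score. If M' is a matching of G whose i-score is lexicographically strictly larger than that of M, then the symmetric difference of M and M' contains (as a subset of its edges) a path of G that is an i-augmenting path with respect to M. -/
open scoped symmDiff

variable {V : Type*}

namespace AugAux
open SimpleGraph

variable {G : SimpleGraph V} {M M' : Finset (Sym2 V)}

lemma eq_of_mem {G : SimpleGraph V} {M : Finset (Sym2 V)} (hM : IsMatching G M)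
    {e f : Sym2 V} {v : V} (he : e ∈ M) (hf : f ∈ M) (hve : v ∈ e) (hvf : v ∈ f) : e = f := by
  by_contra hne
  exact hM.2 e he f hf hne v hve hvf

def AltN (M : Finset (Sym2 V)) : ℕ → ∀ {x y : V}, G.Walk x y → Prop
  | _, _, _, .nil => True
  | σ, _, _, @Walk.cons _ _ u v w _ p => (s(u, v) ∈ M ↔ σ % 2 = 1) ∧ AltN M (σ + 1) p

@[simp] lemma altN_nil {σ : ℕ} {x : V} : AltN (G := G) M σ (Walk.nil (u := x)) := trivial

@[simp] lemma altN_cons {σ : ℕ} {u v w : V} (h : G.Adj u v) (p : G.Walk v w) :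
    AltN M σ (Walk.cons h p) ↔ ((s(u, v) ∈ M ↔ σ % 2 = 1) ∧ AltN M (σ + 1) p) := Iff.rfl

lemma altN_iff_get {σ : ℕ} : ∀ {x y : V} (p : G.Walk x y),
    AltN M σ p ↔ ∀ (k : ℕ) (h : k < p.edges.length), p.edges.get ⟨k, h⟩ ∈ M ↔ (k + σ) % 2 = 1 := by
  intro x y p
  induction p generalizing σ with
  | nil => simp [AltN]
  | cons h p ih =>
    rw [altN_cons, ih]
    constructor
    · rintro ⟨h0, hs⟩ k hk
      match k with
      | 0 => simpa using h0
      | (k+1) =>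
        have := hs k (by simpa [Nat.succ_lt_succ_iff] using hk)
        rw [show k + 1 + σ = k + (σ + 1) by omega]
        simpa using this
    · intro hall
      refine ⟨by simpa using hall 0 (by simp), fun k hk => ?_⟩
      have := hall (k+1) (by simpa [Nat.succ_lt_succ_iff] using hk)
      rw [show k + 1 + σ = k + (σ + 1) by omega] at this
      simpa using this

lemma altN_congr_mod {σ σ' : ℕ} (hσ : σ % 2 = σ' % 2) {x y : V} {p : G.Walk x y}
    (h : AltN M σ p) : AltN M σ' p := by
  rw [altN_iff_get] at h ⊢
  intro k hk
  rw [h k hk, Nat.add_mod, hσ, ← Nat.add_mod]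

lemma altN_concat : ∀ {σ : ℕ} {x y z : V} (p : G.Walk x y) (h : G.Adj y z),
    AltN M σ p → (s(y, z) ∈ M ↔ (σ + p.length) % 2 = 1) →
    AltN M σ (p.concat h) := by
  intro σ x y z p
  induction p generalizing σ with
  | nil =>
    intro h _ he
    rw [Walk.concat_nil]
    exact ⟨by simpa using he, trivial⟩
  | cons h' p ih =>
    intro h halt he
    rw [Walk.concat_cons]
    refine ⟨halt.1, ih h halt.2 ?_⟩
    rw [he]
    constructor <;> (intro h1; simp only [Walk.length_cons] at *; omega)

lemma lastEdge {σ : ℕ} : ∀ {x y : V} (p : G.Walk x y), AltN M σ p → 0 < p.length →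
    ∃ e ∈ p.edges, y ∈ e ∧ (e ∈ M ↔ (σ + p.length) % 2 = 0) := by
  intro x y p
  induction p generalizing σ with
  | nil => intro _ h; simp at h
  | cons h p ih =>
    rename_i u v z
    intro halt _
    rcases halt with ⟨h0, hs⟩
    cases p with
    | nil =>
      refine ⟨s(u, v), by simp, by simp, ?_⟩
      simp only [Walk.length_cons, Walk.length_nil]
      rw [h0]; omega
    | cons h' q =>
      obtain ⟨e, he, hye, hem⟩ := ih hs (by simp)
      refine ⟨e, ?_, hye, ?_⟩
      · rw [Walk.edges_cons]; exact List.mem_cons_of_mem _ he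
      · rw [hem]
        have : σ + 1 + (Walk.cons h' q).length = σ + (Walk.cons h (Walk.cons h' q)).length := by
          simp; omega
        rw [this]

lemma firstEdge {σ : ℕ} {x y : V} (p : G.Walk x y) (halt : AltN M σ p) (hp : 0 < p.length) :
    ∃ e ∈ p.edges, x ∈ e ∧ (e ∈ M ↔ σ % 2 = 1) := by
  cases p with
  | nil => simp at hp
  | cons h q => exact ⟨_, by simp, by simp, halt.1⟩

lemma internal_cov {σ : ℕ} : ∀ {x y : V} (p : G.Walk x y), AltN M σ p →
    ∀ w ∈ p.support, w ≠ x → w ≠ y →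
    (∃ f ∈ p.edges, w ∈ f ∧ f ∈ M) ∧ (∃ f ∈ p.edges, w ∈ f ∧ f ∉ M) := by
  intro x y p
  induction p generalizing σ with
  | nil => intro _ w hw hx _; simp at hw; exact absurd hw hx
  | cons h p ih =>
    rename_i u v z
    intro halt w hw hx hy
    rcases halt with ⟨h0, hs⟩
    have hw' : w ∈ p.support := by
      rcases (by simpa using hw : w = u ∨ w ∈ p.support) with h1 | h1
      · exact absurd h1 hx
      · exact h1
    by_cases hv : w = v
    · subst hv
      cases p with
      | nil => exact absurd rfl hy
      | cons h' q =>
        rename_i v'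
        rcases hs with ⟨h1, _⟩
        rcases Nat.mod_two_eq_zero_or_one σ with hσ | hσ
        · refine ⟨⟨s(w, v'), by simp, by simp, h1.2 (by omega)⟩,
            ⟨s(u, w), by simp, by simp, ?_⟩⟩
          intro hc; rw [h0] at hc; omega
        · refine ⟨⟨s(u, w), by simp, by simp, h0.2 hσ⟩,
            ⟨s(w, v'), by simp, by simp, ?_⟩⟩
          intro hc; rw [h1] at hc; omega
    · obtain ⟨⟨f1, hf1, hwf1, hf1M⟩, ⟨f2, hf2, hwf2, hf2M⟩⟩ := ih hs w hw' hv hy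
      exact ⟨⟨f1, by simp [hf1], hwf1, hf1M⟩, ⟨f2, by simp [hf2], hwf2, hf2M⟩⟩

lemma endpoint_edge_unique : ∀ {x y : V} (p : G.Walk x y), p.IsPath →
    ∀ e ∈ p.edges, ∀ f ∈ p.edges, y ∈ e → y ∈ f → e = f := by
  intro x y p
  induction p with
  | nil => intro _ e he; simp at he
  | cons h p ih =>
    rename_i u v z
    intro hp e he f hf hye hyf
    rw [Walk.cons_isPath_iff] at hp
    cases p with
    | nil =>
      simp only [Walk.edges_cons, Walk.edges_nil, List.mem_singleton] at he hf
      rw [he, hf]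
    | cons h' q =>
      rename_i v'
      -- z is not u nor v
      have hzu : z ≠ u := by
        intro hc; subst hc
        exact hp.2 (Walk.end_mem_support _)
      have hzv : z ≠ v := by
        intro hc; subst hc
        have := hp.1
        rw [Walk.cons_isPath_iff] at this
        exact this.2 (Walk.end_mem_support _)
      have he' : e ∈ (Walk.cons h' q).edges := by
        rcases (by simpa using he : e = s(u, v) ∨ e ∈ (Walk.cons h' q).edges) with h1 | h1
        · exfalso; rw [h1] at hye
          rcases Sym2.mem_iff.1 hye with h2 | h2
          · exact hzu h2
          · exact hzv h2
        · exact h1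
      have hf' : f ∈ (Walk.cons h' q).edges := by
        rcases (by simpa using hf : f = s(u, v) ∨ f ∈ (Walk.cons h' q).edges) with h1 | h1
        · exfalso; rw [h1] at hyf
          rcases Sym2.mem_iff.1 hyf with h2 | h2
          · exact hzu h2
          · exact hzv h2
        · exact h1
      exact ih hp.1 e he' f hf' hye hyf

section Helpers

lemma mem_support_of_mem_edges {x y v : V} {q : G.Walk x y} {e : Sym2 V}
    (he : e ∈ q.edges) (hv : v ∈ e) : v ∈ q.support := by
  induction e with
  | h t u =>
    rcases Sym2.mem_iff.1 hv with rfl | rfl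
    · exact q.fst_mem_support_of_mem_edges he
    · exact q.snd_mem_support_of_mem_edges he

/-- Splitting off the last entry of a lexicographic comparison. -/
lemma lex_append_last : ∀ (s t : List ℕ) (c c' : ℕ), s.length = t.length →
    List.Lex (· < ·) (s ++ [c]) (t ++ [c']) →
    List.Lex (· < ·) s t ∨ (s = t ∧ c < c') := by
  intro s
  induction s with
  | nil =>
    intro t c c' hlen hlex
    have ht : t = [] := by cases t <;> simp_all
    subst ht
    simp only [List.nil_append] at hlex
    cases hlex with
    | rel h => exact Or.inr ⟨rfl, h⟩
    | cons h => cases h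
  | cons a s ih =>
    intro t c c' hlen hlex
    cases t with
    | nil => simp at hlen
    | cons b t =>
      simp only [List.cons_append] at hlex
      cases hlex with
      | rel h => exact Or.inl (List.Lex.rel h)
      | cons h =>
        rcases ih t c c' (by simpa using hlen) h with h1 | ⟨h1, h2⟩
        · exact Or.inl (List.Lex.cons h1)
        · exact Or.inr ⟨by rw [h1], h2⟩

lemma lex_of_lt_at : ∀ (k : ℕ) (s t : List ℕ),
    (∀ j, j < k → ∀ (h1 : j < s.length) (h2 : j < t.length), s.get ⟨j, h1⟩ = t.get ⟨j, h2⟩) →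
    (∀ (h1 : k < s.length) (h2 : k < t.length), s.get ⟨k, h1⟩ < t.get ⟨k, h2⟩) →
    k < s.length → k < t.length → List.Lex (· < ·) s t := by
  intro k
  induction k with
  | zero =>
    intro s t _ hlt h1 h2
    cases s with
    | nil => simp at h1
    | cons a s =>
      cases t with
      | nil => simp at h2
      | cons b t => exact List.Lex.rel (hlt (by simp) (by simp))
  | succ k ih =>
    intro s t heq hlt h1 h2
    cases s with
    | nil => simp at h1
    | cons a s =>
      cases t with
      | nil => simp at h2
      | cons b t =>
        have hab : a = b := heq 0 (by omega) (by simp) (by simp)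
        subst hab
        refine List.Lex.cons (ih s t ?_ ?_ (by simpa using h1) (by simpa using h2))
        · intro j hj hj1 hj2
          exact heq (j+1) (by omega) (by simpa using hj1) (by simpa using hj2)
        · intro hj1 hj2
          exact hlt (by simpa using hj1) (by simpa using hj2)

lemma eq_at_of_map_range_eq {g g' : ℕ → ℕ} {L : ℕ}
    (h : (List.range L).map g = (List.range L).map g') : ∀ l < L, g l = g' l := by
  intro l hl
  have := congrArg (fun s : List ℕ => s[l]?) h
  simpa [List.getElem?_map, List.getElem?_range, hl] using this

lemma altN_reverse_even {a y : V} {q : G.Walk a y} (halt : AltN M 0 q)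
    (heven : q.length % 2 = 0) : AltN M 1 q.reverse := by
  rw [altN_iff_get] at halt ⊢
  intro k hk
  have hlen : q.reverse.edges.length = q.edges.length := by
    rw [Walk.edges_reverse, List.length_reverse]
  have hk' : k < q.edges.length := hlen ▸ hk
  have hget : q.reverse.edges.get ⟨k, hk⟩ = q.edges.get ⟨q.edges.length - 1 - k, by omega⟩ := by
    simp only [List.get_eq_getElem]
    have : q.reverse.edges[k]'hk = (q.edges.reverse)[k]'(by
        rw [List.length_reverse]; exact hk') := by
      congr 1
      exact Walk.edges_reverse q
    rw [this, List.getElem_reverse]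
  rw [hget, halt _ (by omega)]
  have hq : q.edges.length = q.length := Walk.length_edges q
  omega

end Helpers
section Core
variable [DecidableEq V] (hM : IsMatching G M) (hM' : IsMatching G M')

include hM hM' in
lemma sd_edge {e : Sym2 V} (he : e ∈ M ∆ M') : e ∈ G.edgeSet := by
  rcases Finset.mem_symmDiff.1 he with ⟨h1, _⟩ | ⟨h1, _⟩
  · exact hM.1 h1
  · exact hM'.1 h1

include hM hM' in
lemma sd_M' {e : Sym2 V} (he : e ∈ M ∆ M') (hne : e ∉ M) : e ∈ M' := by
  rcases Finset.mem_symmDiff.1 he with ⟨h1, _⟩ | ⟨h1, _⟩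
  · exact absurd h1 hne
  · exact h1

include hM hM' in
lemma new_edge_parity {a x : V} (ha : ¬ Matches M a) (p : G.Walk a x)
    (halt : AltN M 0 p) (hsub : ∀ e ∈ p.edges, e ∈ M ∆ M')
    {e : Sym2 V} (he : e ∈ M ∆ M') (hxe : x ∈ e) (hnew : e ∉ p.edges) :
    (e ∈ M ↔ p.length % 2 = 1) := by
  cases p with
  | nil =>
    simp only [Walk.length_nil]
    constructor
    · intro hm; exact absurd ⟨e, hm, hxe⟩ ha
    · omega
  | cons h p' =>
    obtain ⟨f, hf, hxf, hfM⟩ := lastEdge _ halt (by simp)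
    have hef : e ≠ f := fun hc => hnew (hc ▸ hf)
    rcases Nat.mod_two_eq_zero_or_one (Walk.cons h p').length with h0 | h1
    · have hfM' : f ∈ M := hfM.2 (by omega)
      rw [h0]
      constructor
      · intro hm; exact absurd (eq_of_mem hM hm hfM' hxe hxf) hef
      · omega
    · have hfnM : f ∉ M := fun hc => by rw [hfM] at hc; omega
      have hfM' : f ∈ M' := sd_M' hM hM' (hsub f hf) hfnM
      rw [h1]
      refine ⟨fun _ => rfl, fun _ => ?_⟩
      by_contra hem
      exact hef (eq_of_mem hM' (sd_M' hM hM' he hem) hfM' hxe hxf)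

include hM hM' in
lemma fresh_vertex {a x : V} (ha : ¬ Matches M a) (p : G.Walk a x)
    (halt : AltN M 0 p) (hsub : ∀ e ∈ p.edges, e ∈ M ∆ M')
    {e : Sym2 V} (he : e ∈ M ∆ M') (hnew : e ∉ p.edges)
    {w : V} (hwe : w ∈ e) (hwx : w ≠ x) : w ∉ p.support := by
  intro hw
  have hcov : w ≠ a →
      (∃ f ∈ p.edges, w ∈ f ∧ f ∈ M) ∧ ∃ f ∈ p.edges, w ∈ f ∧ f ∉ M :=
    fun hne => internal_cov p halt w hw hne hwx
  rcases Finset.mem_symmDiff.1 he with ⟨heM, _⟩ | ⟨heM', _⟩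
  · by_cases hwa' : w = a
    · exact ha ⟨e, heM, hwa' ▸ hwe⟩
    · obtain ⟨⟨f, hf, hwf, hfM⟩, _⟩ := hcov hwa'
      exact hnew ((eq_of_mem hM heM hfM hwe hwf) ▸ hf)
  · by_cases hwa' : w = a
    · subst hwa'
      have hlen : 0 < p.length := by
        cases p with
        | nil => exact absurd rfl hwx
        | cons h p' => simp
      obtain ⟨f, hf, haf, hfM⟩ := firstEdge p halt hlen
      have hfnM : f ∉ M := fun hc => by rw [hfM] at hc; omega
      exact hnew ((eq_of_mem hM' heM' (sd_M' hM hM' (hsub f hf) hfnM) hwe haf) ▸ hf)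
    · obtain ⟨_, ⟨f, hf, hwf, hfnM⟩⟩ := hcov hwa'
      exact hnew ((eq_of_mem hM' heM' (sd_M' hM hM' (hsub f hf) hfnM) hwe hwf) ▸ hf)

include hM hM' in
lemma extend [Fintype V] {a : V} (ha : ¬ Matches M a) :
    ∀ (n : ℕ) {x : V} (p : G.Walk a x), Fintype.card V + 1 ≤ n + p.support.length →
    p.IsPath → AltN M 0 p → (∀ e ∈ p.edges, e ∈ M ∆ M') →
    ∃ (y : V) (q : G.Walk a y), q.IsPath ∧ AltN M 0 q ∧ (∀ e ∈ q.edges, e ∈ M ∆ M') ∧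
      (∀ e ∈ M ∆ M', y ∈ e → e ∈ q.edges) := by
  intro n
  induction n with
  | zero =>
    intro x p hcard hpath _ _
    have h1 := hpath.length_lt
    have h2 : p.support.length = p.length + 1 := Walk.length_support p
    omega
  | succ n ih =>
    intro x p hcard hpath halt hsub
    by_cases hmax : ∀ e ∈ M ∆ M', x ∈ e → e ∈ p.edges
    · exact ⟨x, p, hpath, halt, hsub, hmax⟩
    · push_neg at hmax
      obtain ⟨e, he, hxe, hnew⟩ := hmax
      obtain ⟨w, rfl⟩ := Sym2.mem_iff_exists.1 hxe
      have hadj : G.Adj x w := G.mem_edgeSet.mp (sd_edge hM hM' he)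
      have hwx : w ≠ x := by intro hc; subst hc; exact G.irrefl hadj
      have hwp : w ∉ p.support :=
        fresh_vertex hM hM' ha p halt hsub he hnew (Sym2.mem_mk_right x w) hwx
      have hq : (p.concat hadj).IsPath := by
        rw [Walk.isPath_def, Walk.support_concat]
        exact List.Nodup.append hpath.support_nodup (List.nodup_singleton w)
          (by
            rw [List.disjoint_singleton]
            exact hwp)
      have halt' : AltN M 0 (p.concat hadj) :=
        altN_concat p hadj halt (by
          have := new_edge_parity hM hM' ha p halt hsub he hxe hnew
          simpa using this)
      have hsub' : ∀ f ∈ (p.concat hadj).edges, f ∈ M ∆ M' := by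
        intro f hf
        rw [Walk.edges_concat, List.concat_eq_append, List.mem_append] at hf
        rcases hf with hf | hf
        · exact hsub f hf
        · rw [List.mem_singleton] at hf; exact hf ▸ he
      have hcard' : Fintype.card V + 1 ≤ n + (p.concat hadj).support.length := by
        rw [Walk.support_concat, List.length_append]
        simp only [List.length_singleton]
        omega
      exact ih (p.concat hadj) hcard' hq halt' hsub'

include hM hM' in
lemma det : ∀ {x y : V} (σ : ℕ) (p : G.Walk x y), p.IsPath → AltN M σ p →
    (∀ e ∈ p.edges, e ∈ M ∆ M') → (∀ e ∈ M ∆ M', y ∈ e → e ∈ p.edges) →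
    ∀ {z : V} (q : G.Walk x z), q.IsPath → AltN M σ q →
    (∀ e ∈ q.edges, e ∈ M ∆ M') → (∀ e ∈ M ∆ M', z ∈ e → e ∈ q.edges) → y = z := by
  intro x y σ p
  induction p generalizing σ with
  | @nil x =>
    intro _ _ _ hmp z q hq haq hsq hmq
    cases q with
    | nil => rfl
    | cons h2 q' =>
      exfalso
      rename_i u2
      have h1 : s(x, u2) ∈ M ∆ M' := hsq s(x, u2) (by simp)
      have := hmp _ h1 (Sym2.mem_mk_left _ _)
      simp at this
  | @cons x u y h p' ihp =>
    intro hp hap hsp hmp z q hq haq hsq hmq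
    cases q with
    | nil =>
      exfalso
      have h1 : s(x, u) ∈ M ∆ M' := hsp s(x, u) (by simp)
      have := hmq _ h1 (Sym2.mem_mk_left _ _)
      simp at this
    | cons h2 q' =>
      rename_i u2
      have he1 : s(x, u) ∈ M ∆ M' := hsp s(x, u) (by simp)
      have he2 : s(x, u2) ∈ M ∆ M' := hsq s(x, u2) (by simp)
      have hpar1 := ((altN_cons h p').1 hap).1
      have hpar2 := ((altN_cons h2 q').1 haq).1
      have heq : s(x, u) = s(x, u2) := by
        rcases Nat.mod_two_eq_zero_or_one σ with hσ | hσ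
        · have hn1 : s(x, u) ∉ M := fun hc => by rw [hpar1] at hc; omega
          have hn2 : s(x, u2) ∉ M := fun hc => by rw [hpar2] at hc; omega
          exact eq_of_mem hM' (sd_M' hM hM' he1 hn1) (sd_M' hM hM' he2 hn2)
            (Sym2.mem_mk_left _ _) (Sym2.mem_mk_left _ _)
        · exact eq_of_mem hM (hpar1.2 hσ) (hpar2.2 hσ)
            (Sym2.mem_mk_left _ _) (Sym2.mem_mk_left _ _)
      have huu : u = u2 := by
        rcases Sym2.eq_iff.1 heq with ⟨_, h5⟩ | ⟨hh1, hh2⟩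
        · exact h5
        · rw [hh2, hh1]
      subst huu
      -- now p' : Walk u y, q' : Walk u z
      cases p' with
      | nil =>
        cases q' with
        | nil => rfl
        | cons h3 q'' =>
          exfalso
          rename_i u3
          have hf : s(u, u3) ∈ M ∆ M' := hsq s(u, u3) (by simp)
          have hmem := hmp _ hf (Sym2.mem_mk_left _ _)
          simp only [Walk.edges_cons, Walk.edges_nil, List.mem_singleton] at hmem
          rw [Walk.cons_isPath_iff] at hq
          rcases Sym2.eq_iff.1 hmem with ⟨hux, _⟩ | ⟨_, hu3x⟩
          · exact hq.2 (hux ▸ Walk.start_mem_support (Walk.cons h3 q''))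
          · apply hq.2
            have : u3 ∈ (Walk.cons h3 q'').support := by
              rw [Walk.support_cons]
              exact List.mem_cons_of_mem _ (Walk.start_mem_support q'')
            exact hu3x ▸ this
      | cons h3 p'' =>
        rename_i u3
        cases q' with
        | nil =>
          exfalso
          have hf : s(u, u3) ∈ M ∆ M' := hsp s(u, u3) (by simp)
          have hmem := hmq _ hf (Sym2.mem_mk_left _ _)
          simp only [Walk.edges_cons, Walk.edges_nil, List.mem_singleton] at hmem
          rw [Walk.cons_isPath_iff] at hp
          rcases Sym2.eq_iff.1 hmem with ⟨hux, _⟩ | ⟨_, hu3x⟩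
          · exact hp.2 (hux ▸ Walk.start_mem_support (Walk.cons h3 p''))
          · apply hp.2
            have : u3 ∈ (Walk.cons h3 p'').support := by
              rw [Walk.support_cons]
              exact List.mem_cons_of_mem _ (Walk.start_mem_support p'')
            exact hu3x ▸ this
        | cons h4 q'' =>
          rename_i u4
          have hp2 := hp.of_cons
          have hq2 := hq.of_cons
          have hyu : y ≠ u := by
            intro hc
            rw [Walk.cons_isPath_iff] at hp2
            exact hp2.2 (hc ▸ Walk.end_mem_support p'')
          have hyx : y ≠ x := by
            intro hc
            rw [Walk.cons_isPath_iff] at hp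
            exact hp.2 (hc ▸ Walk.end_mem_support (Walk.cons h3 p''))
          have hzu : z ≠ u := by
            intro hc
            rw [Walk.cons_isPath_iff] at hq2
            exact hq2.2 (hc ▸ Walk.end_mem_support q'')
          have hzx : z ≠ x := by
            intro hc
            rw [Walk.cons_isPath_iff] at hq
            exact hq.2 (hc ▸ Walk.end_mem_support (Walk.cons h4 q''))
          have hmp' : ∀ e ∈ M ∆ M', y ∈ e → e ∈ (Walk.cons h3 p'').edges := by
            intro e he hye
            have hmem := hmp e he hye
            rw [Walk.edges_cons, List.mem_cons] at hmem
            rcases hmem with h5 | h5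
            · exfalso
              rw [h5] at hye
              rcases Sym2.mem_iff.1 hye with h6 | h6
              · exact hyx h6
              · exact hyu h6
            · exact h5
          have hmq' : ∀ e ∈ M ∆ M', z ∈ e → e ∈ (Walk.cons h4 q'').edges := by
            intro e he hze
            have hmem := hmq e he hze
            rw [Walk.edges_cons, List.mem_cons] at hmem
            rcases hmem with h5 | h5
            · exfalso
              rw [h5] at hze
              rcases Sym2.mem_iff.1 hze with h6 | h6
              · exact hzx h6
              · exact hzu h6
            · exact h5
          exact ihp (σ + 1) hp2 ((altN_cons h _).1 hap).2
            (fun e he => hsp e (by rw [Walk.edges_cons]; exact List.mem_cons_of_mem _ he)) hmp'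
            (Walk.cons h4 q'') hq2 ((altN_cons h2 _).1 haq).2
            (fun e he => hsq e (by rw [Walk.edges_cons]; exact List.mem_cons_of_mem _ he)) hmq'


include hM hM' in
lemma flip_lemma {a y : V} (q : G.Walk a y) (halt : AltN M 0 q)
    (hsub : ∀ e ∈ q.edges, e ∈ M ∆ M') (hmaxq : ∀ e ∈ M ∆ M', y ∈ e → e ∈ q.edges)
    (ha : ¬ Matches M a) (haM' : Matches M' a) (hyM : Matches M y) (hyM' : ¬ Matches M' y) :
    IsMatching G ((M' \ q.edges.toFinset) ∪ (M ∩ q.edges.toFinset)) ∧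
    Matches ((M' \ q.edges.toFinset) ∪ (M ∩ q.edges.toFinset)) y ∧
    (∀ v, v ≠ a → v ≠ y →
      (Matches ((M' \ q.edges.toFinset) ∪ (M ∩ q.edges.toFinset)) v ↔ Matches M' v)) := by
  set E : Finset (Sym2 V) := q.edges.toFinset with hE
  set N : Finset (Sym2 V) := (M' \ E) ∪ (M ∩ E) with hN
  -- the M-edge of y is on the walk
  obtain ⟨fy, hfyM, hyfy⟩ := hyM
  have hfyM' : fy ∉ M' := fun hc => hyM' ⟨fy, hc, hyfy⟩
  have hfyq : fy ∈ q.edges := hmaxq fy (Finset.mem_symmDiff.2 (Or.inl ⟨hfyM, hfyM'⟩)) hyfy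
  -- the M'-edge of a is on the walk
  obtain ⟨ga, hgaM', haga⟩ := haM'
  have hgaM : ga ∉ M := fun hc => ha ⟨ga, hc, haga⟩
  have hq0 : 0 < q.length := by
    cases q with
    | nil => simp at hfyq
    | cons _ _ => simp
  obtain ⟨f0, hf0q, haf0, hf0M⟩ := firstEdge q halt hq0
  have hf0nM : f0 ∉ M := fun hc => by rw [hf0M] at hc; omega
  have hgaq : ga ∈ q.edges := by
    rw [eq_of_mem hM' hgaM' (sd_M' hM hM' (hsub f0 hf0q) hf0nM) haga haf0]
    exact hf0q
  -- key: an M'-edge not on the walk cannot meet a walk vertex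
  have key : ∀ e ∈ M', e ∉ E → ∀ v ∈ e, v ∈ q.support → False := by
    intro e heM' heE v hve hvs
    by_cases hvy : v = y
    · exact hyM' ⟨e, heM', hvy ▸ hve⟩
    by_cases hva : v = a
    · subst hva
      exact heE (by rw [hE, List.mem_toFinset]; exact (eq_of_mem hM' heM' hgaM' hve haga) ▸ hgaq)
    · obtain ⟨_, ⟨f, hfq, hvf, hfnM⟩⟩ := internal_cov q halt v hvs hva hvy
      have hfM' : f ∈ M' := sd_M' hM hM' (hsub f hfq) hfnM
      exact heE (by rw [hE, List.mem_toFinset]; exact (eq_of_mem hM' heM' hfM' hve hvf) ▸ hfq)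
  refine ⟨⟨?_, ?_⟩, ⟨fy, by simp [hN, Finset.mem_union, Finset.mem_inter, hfyM,
      hE, List.mem_toFinset, hfyq], hyfy⟩, ?_⟩
  · -- edges of G
    intro e he
    rw [hN] at he
    simp only [Finset.coe_union, Set.mem_union, Finset.coe_sdiff, Set.mem_diff,
      Finset.coe_inter, Set.mem_inter_iff] at he
    rcases he with ⟨h1, _⟩ | ⟨h1, _⟩
    · exact hM'.1 h1
    · exact hM.1 h1
  · -- pairwise disjoint
    intro e he f hf hef v hve hvf
    rw [hN, Finset.mem_union] at he hf
    have hmix : ∀ e' f', e' ∈ M' \ E → f' ∈ M ∩ E → v ∈ e' → v ∈ f' → False := by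
      intro e' f' he' hf' hve' hvf'
      rw [Finset.mem_sdiff] at he'
      rw [Finset.mem_inter] at hf'
      have hvs : v ∈ q.support :=
        mem_support_of_mem_edges (by rw [hE, List.mem_toFinset] at hf'; exact hf'.2) hvf'
      exact key e' he'.1 he'.2 v hve' hvs
    rcases he with he | he <;> rcases hf with hf | hf
    · exact hM'.2 e (Finset.mem_sdiff.1 he).1 f (Finset.mem_sdiff.1 hf).1 hef v hve hvf
    · exact hmix e f he hf hve hvf
    · exact hmix f e hf he hvf hve
    · exact hM.2 e (Finset.mem_inter.1 he).1 f (Finset.mem_inter.1 hf).1 hef v hve hvf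
  · -- matched vertices agree away from a and y
    intro v hva hvy
    constructor
    · rintro ⟨g, hg, hvg⟩
      rw [hN, Finset.mem_union] at hg
      rcases hg with hg | hg
      · exact ⟨g, (Finset.mem_sdiff.1 hg).1, hvg⟩
      · rw [Finset.mem_inter, hE, List.mem_toFinset] at hg
        have hvs : v ∈ q.support := mem_support_of_mem_edges hg.2 hvg
        obtain ⟨_, ⟨f, hfq, hvf, hfnM⟩⟩ := internal_cov q halt v hvs hva hvy
        exact ⟨f, sd_M' hM hM' (hsub f hfq) hfnM, hvf⟩
    · rintro ⟨g, hg, hvg⟩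
      by_cases hgE : g ∈ E
      · rw [hE, List.mem_toFinset] at hgE
        have hvs : v ∈ q.support := mem_support_of_mem_edges hgE hvg
        obtain ⟨⟨f, hfq, hvf, hfM⟩, _⟩ := internal_cov q halt v hvs hva hvy
        refine ⟨f, ?_, hvf⟩
        rw [hN, Finset.mem_union, Finset.mem_inter, hE, List.mem_toFinset]
        exact Or.inr ⟨hfM, hfq⟩
      · refine ⟨g, ?_, hvg⟩
        rw [hN, Finset.mem_union, Finset.mem_sdiff]
        exact Or.inl ⟨hg, hgE⟩

include hM hM' in
/-- Two maximal alternating even walks ending at the same `M`-matched vertex start at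
the same vertex. -/
lemma inj_aux {a1 a2 y : V} (q1 : G.Walk a1 y) (q2 : G.Walk a2 y)
    (hq1 : q1.IsPath) (ha1 : AltN M 0 q1) (hs1 : ∀ e ∈ q1.edges, e ∈ M ∆ M')
    (hm1 : ∀ e ∈ M ∆ M', y ∈ e → e ∈ q1.edges) (he1 : q1.length % 2 = 0)
    (hq2 : q2.IsPath) (ha2 : AltN M 0 q2) (hs2 : ∀ e ∈ q2.edges, e ∈ M ∆ M')
    (hm2 : ∀ e ∈ M ∆ M', y ∈ e → e ∈ q2.edges) (he2 : q2.length % 2 = 0)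
    (hMa1 : ¬ Matches M a1) (hMa2 : ¬ Matches M a2) (hyM : Matches M y) :
    a1 = a2 := by
  have hrev : ∀ (a : V) (q : G.Walk a y), q.IsPath → AltN M 0 q →
      (∀ e ∈ q.edges, e ∈ M ∆ M') → (∀ e ∈ M ∆ M', y ∈ e → e ∈ q.edges) →
      q.length % 2 = 0 → ¬ Matches M a →
      q.reverse.IsPath ∧ AltN M 1 q.reverse ∧ (∀ e ∈ q.reverse.edges, e ∈ M ∆ M') ∧
      (∀ e ∈ M ∆ M', a ∈ e → e ∈ q.reverse.edges) := by
    intro a q hq halt hsub hmaxq heven hMa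
    have hya : y ≠ a := fun hc => hMa (hc ▸ hyM)
    have hpos : 0 < q.length :=
      Nat.pos_of_ne_zero (fun h0 => hya (Walk.eq_of_length_eq_zero h0).symm)
    obtain ⟨f0, hf0q, haf0, hf0iff⟩ := firstEdge q halt hpos
    have hf0nM : f0 ∉ M := fun hc => by rw [hf0iff] at hc; omega
    have hf0M' : f0 ∈ M' := sd_M' hM hM' (hsub f0 hf0q) hf0nM
    refine ⟨hq.reverse, altN_reverse_even halt heven, ?_, ?_⟩
    · intro e he
      rw [Walk.edges_reverse, List.mem_reverse] at he
      exact hsub e he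
    · intro e he hae
      rcases Finset.mem_symmDiff.1 he with ⟨heM, _⟩ | ⟨heM', _⟩
      · exact absurd ⟨e, heM, hae⟩ hMa
      · rw [Walk.edges_reverse, List.mem_reverse]
        rw [eq_of_mem hM' heM' hf0M' hae haf0]
        exact hf0q
  obtain ⟨hr1, hra1, hrs1, hrm1⟩ := hrev a1 q1 hq1 ha1 hs1 hm1 he1 hMa1
  obtain ⟨hr2, hra2, hrs2, hrm2⟩ := hrev a2 q2 hq2 ha2 hs2 hm2 he2 hMa2
  exact det hM hM' 1 q1.reverse hr1 hra1 hrs1 hrm1 q2.reverse hr2 hra2 hrs2 hrm2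

end Core
end AugAux

/-- if `M` has maximum `(i-1)`-score and `M'` has a lexicographically
larger `i`-score, then the symmetric difference `M ∆ M'` contains an
`i`-augmenting path with respect to `M`. -/
theorem symmDiff_contains_iAugPath
    {V : Type*} [Fintype V] [DecidableEq V] (G : SimpleGraph V) (ρ : V → ℕ)
    (hρ : ∀ v, 1 ≤ ρ v ∧ ρ v ≤ Fintype.card V)
    (i : ℕ) (hi1 : 1 ≤ i) (hin : i ≤ Fintype.card V)
    (M : Finset (Sym2 V)) (hM : IsMatching G M)
    (hmax : HasMaxScore G ρ (i - 1) M)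
    (M' : Finset (Sym2 V)) (hM' : IsMatching G M')
    (hlt : ScoreLT (score ρ i M) (score ρ i M')) :
    ∃ (a b : V) (p : G.Walk a b),
      IsAugPath G M ρ i p ∧ ∀ e ∈ p.edges, e ∈ M ∆ M' := by
  classical
  open AugAux SimpleGraph in
  obtain ⟨j, rfl⟩ : ∃ j, i = j + 1 := ⟨i - 1, by omega⟩
  have hmaxj : HasMaxScore G ρ j M := hmax
  have hsplit : ∀ X : Finset (Sym2 V), score ρ (j + 1) X =
      score ρ j X ++ [Set.ncard {v | ρ v = j + 1 ∧ Matches X v}] := by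
    intro X; simp [score, List.range_succ]
  have hpre : score ρ j M = score ρ j M' ∧
      Set.ncard {v | ρ v = j + 1 ∧ Matches M v} <
        Set.ncard {v | ρ v = j + 1 ∧ Matches M' v} := by
    have h := hlt
    rw [ScoreLT, hsplit M, hsplit M'] at h
    rcases lex_append_last _ _ _ _ (by simp [score]) h with h1 | h1
    · exact absurd h1 (hmaxj M' hM')
    · exact h1
  by_contra hcon
  set X : Set V := {v | ρ v = j + 1 ∧ Matches M v} with hX
  set X' : Set V := {v | ρ v = j + 1 ∧ Matches M' v} with hX'
  -- every vertex of X' \ X leads to a "bad end"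
  have hstep : ∀ a ∈ X' \ X, ∃ y : V, ∃ q : G.Walk a y, q.IsPath ∧ AltN M 0 q ∧
      (∀ e ∈ q.edges, e ∈ M ∆ M') ∧ (∀ e ∈ M ∆ M', y ∈ e → e ∈ q.edges) ∧
      q.length % 2 = 0 ∧ ρ y = j + 1 ∧ Matches M y ∧ ¬ Matches M' y := by
    rintro a ⟨haX', hnX⟩
    obtain ⟨hρa, haM'⟩ := haX'
    have haM : ¬ Matches M a := fun h => hnX ⟨hρa, h⟩
    obtain ⟨y, q, hq, halt, hsub, hmaxq⟩ := extend hM hM' haM (Fintype.card V)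
      Walk.nil (by simp) (by simp [Walk.isPath_def]) (by simp) (by simp)
    obtain ⟨ga, hgaM', haga⟩ := haM'
    have hganM : ga ∉ M := fun hc => haM ⟨ga, hc, haga⟩
    have hq0 : 0 < q.length := by
      cases q with
      | nil =>
        have := hmaxq ga (Finset.mem_symmDiff.2 (Or.inr ⟨hgaM', hganM⟩)) haga
        simp at this
      | cons _ _ => simp
    have haltg : Alternating M q := by
      intro k h
      have := (altN_iff_get q).1 halt k h
      simpa using this
    obtain ⟨f, hfq, hyf, hfiff⟩ := lastEdge q halt hq0
    rcases Nat.mod_two_eq_zero_or_one q.length with heven | hodd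
    · -- even length: y is matched by M, unmatched by M'
      have hfM : f ∈ M := hfiff.2 (by omega)
      have hyM : Matches M y := ⟨f, hfM, hyf⟩
      have hfnM' : f ∉ M' := by
        rcases Finset.mem_symmDiff.1 (hsub f hfq) with ⟨_, h2⟩ | ⟨_, h2⟩
        · exact h2
        · exact absurd hfM h2
      have hyM' : ¬ Matches M' y := by
        rintro ⟨g, hgM', hyg⟩
        by_cases hgM : g ∈ M
        · exact hfnM' ((eq_of_mem hM hgM hfM hyg hyf) ▸ hgM')
        · have hgq := hmaxq g (Finset.mem_symmDiff.2 (Or.inr ⟨hgM', hgM⟩)) hyg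
          exact hfnM' ((endpoint_edge_unique q hq g hgq f hfq hyg hyf) ▸ hgM')
      rcases lt_trichotomy (ρ y) (j + 1) with hylt | hyeq | hygt
      · -- flip: contradiction with maximality of the j-score of M
        exfalso
        obtain ⟨hNmatch, hNy, hNagree⟩ :=
          flip_lemma hM hM' q halt hsub hmaxq haM ⟨ga, hgaM', haga⟩ hyM hyM'
        set N : Finset (Sym2 V) := (M' \ q.edges.toFinset) ∪ (M ∩ q.edges.toFinset) with hNdef
        apply hmaxj N hNmatch
        have hya : y ≠ a := fun hc => haM (hc ▸ hyM)
        have hρy1 : 1 ≤ ρ y := (hρ y).1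
        set k : ℕ := ρ y - 1 with hk
        have hkj : k < j := by omega
        have hMM' : ∀ l < j, Set.ncard {v | ρ v = l + 1 ∧ Matches M v} =
            Set.ncard {v | ρ v = l + 1 ∧ Matches M' v} :=
          eq_at_of_map_range_eq hpre.1
        have hNM' : ∀ l, l < j → l + 1 ≠ ρ y →
            Set.ncard {v | ρ v = l + 1 ∧ Matches N v} =
            Set.ncard {v | ρ v = l + 1 ∧ Matches M' v} := by
          intro l hl hlne
          congr 1
          ext v
          simp only [Set.mem_setOf_eq]
          constructor
          · rintro ⟨h1, h2⟩
            refine ⟨h1, (hNagree v ?_ ?_).1 h2⟩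
            · intro hc; rw [hc, hρa] at h1; omega
            · intro hc; rw [hc] at h1; exact hlne h1.symm
          · rintro ⟨h1, h2⟩
            refine ⟨h1, (hNagree v ?_ ?_).2 h2⟩
            · intro hc; rw [hc, hρa] at h1; omega
            · intro hc; rw [hc] at h1; exact hlne h1.symm
        have hinsert : {v | ρ v = k + 1 ∧ Matches N v} =
            insert y {v | ρ v = k + 1 ∧ Matches M' v} := by
          ext v
          simp only [Set.mem_setOf_eq, Set.mem_insert_iff]
          constructor
          · rintro ⟨h1, h2⟩
            by_cases hvy : v = y
            · exact Or.inl hvy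
            · refine Or.inr ⟨h1, (hNagree v ?_ hvy).1 h2⟩
              intro hc; rw [hc, hρa] at h1; omega
          · rintro (rfl | ⟨h1, h2⟩)
            · exact ⟨by omega, hNy⟩
            · by_cases hvy : v = y
              · exact absurd (hvy ▸ h2) hyM'
              · refine ⟨h1, (hNagree v ?_ hvy).2 h2⟩
                intro hc; rw [hc, hρa] at h1; omega
        have hkN : Set.ncard {v | ρ v = k + 1 ∧ Matches N v} =
            Set.ncard {v | ρ v = k + 1 ∧ Matches M' v} + 1 := by
          rw [hinsert]
          exact Set.ncard_insert_of_notMem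
            (fun hc => hyM' hc.2) (Set.toFinite _)
        rw [ScoreLT]
        apply lex_of_lt_at k
        · intro l hl hl1 hl2
          have hlj : l < j := by simp only [score, List.length_map, List.length_range] at hl1; omega
          have hlt' : l + 1 ≠ ρ y := by omega
          simp only [score, List.get_eq_getElem, List.getElem_map, List.getElem_range]
          rw [hMM' l hlj, hNM' l hlj hlt']
        · intro h1 h2
          simp only [score, List.get_eq_getElem, List.getElem_map, List.getElem_range]
          rw [hMM' k hkj, hkN]
          omega
        · simp only [score, List.length_map, List.length_range]; omega
        · simp only [score, List.length_map, List.length_range]; omega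
      · exact ⟨y, q, hq, halt, hsub, hmaxq, heven, hyeq, hyM, hyM'⟩
      · -- priority of y exceeds j+1: augmenting path found, contradiction
        exfalso
        exact hcon ⟨a, y, q, ⟨hq, hq0, haltg, haM, hρa, fun _ => hygt⟩, hsub⟩
    · -- odd length: y is unmatched by M: augmenting path found
      exfalso
      have hfnM : f ∉ M := fun hc => by rw [hfiff] at hc; omega
      have hfM' : f ∈ M' := sd_M' hM hM' (hsub f hfq) hfnM
      have hyM : ¬ Matches M y := by
        rintro ⟨g, hgM, hyg⟩
        by_cases hgM' : g ∈ M'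
        · exact hfnM ((eq_of_mem hM' hgM' hfM' hyg hyf) ▸ hgM)
        · have hgq := hmaxq g (Finset.mem_symmDiff.2 (Or.inl ⟨hgM, hgM'⟩)) hyg
          exact hfnM ((endpoint_edge_unique q hq g hgq f hfq hyg hyf) ▸ hgM)
      exact hcon ⟨a, y, q, ⟨hq, hq0, haltg, haM, hρa, fun h => absurd h hyM⟩, hsub⟩
  -- build the injection from X' \ X to X \ X'
  choose F hF using hstep
  have hmapsto : ∀ a (ha : a ∈ X' \ X), F a ha ∈ X \ X' := by
    intro a ha
    obtain ⟨q, _, _, _, _, _, hρy, hyM, hyM'⟩ := hF a ha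
    exact ⟨⟨hρy, hyM⟩, fun hc => hyM' hc.2⟩
  set Φ : V → V := fun a => if h : a ∈ X' \ X then F a h else a with hΦ
  have hmaps : ∀ a ∈ X' \ X, Φ a ∈ X \ X' := by
    intro a ha
    simp only [hΦ, dif_pos ha]
    exact hmapsto a ha
  have hinj : Set.InjOn Φ (X' \ X) := by
    intro a1 h1 a2 h2 heq
    simp only [hΦ, dif_pos h1, dif_pos h2] at heq
    have hF2 := hF a2 h2
    rw [← heq] at hF2
    obtain ⟨q1, hq1, ha1, hs1, hm1, he1, _, hyM1, _⟩ := hF a1 h1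
    obtain ⟨q2, hq2, ha2, hs2, hm2, he2, _, _, _⟩ := hF2
    have hMa1 : ¬ Matches M a1 := fun h => h1.2 ⟨h1.1.1, h⟩
    have hMa2 : ¬ Matches M a2 := fun h => h2.2 ⟨h2.1.1, h⟩
    exact AugAux.inj_aux hM hM' q1 q2 hq1 ha1 hs1 hm1 he1 hq2 ha2 hs2 hm2 he2 hMa1 hMa2 hyM1
  have hcard : (X' \ X).ncard ≤ (X \ X').ncard :=
    Set.ncard_le_ncard_of_injOn Φ hmaps hinj (Set.toFinite _)
  have e1 := Set.ncard_inter_add_ncard_diff_eq_ncard X' X (Set.toFinite _)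
  have e2 := Set.ncard_inter_add_ncard_diff_eq_ncard X X' (Set.toFinite _)
  rw [Set.inter_comm] at e1
  have : X.ncard < X'.ncard := hpre.2
  omega
end

section
/- Let G be a finite simple graph, S a set of vertices of G, and let M and M' be matchings of G such that the count of M is strictly smaller than the count of M'. Then G contains an augmenting path with respect to M and S; moreover such a path can be chosen with all of its edges in the symmetric difference of M and M'. -/
open scoped symmDiff

variable {V : Type*}

lemma IsMatching.eq_of_mem {G : SimpleGraph V} {M : Finset (Sym2 V)} (hM : IsMatching G M)
    {g g' : Sym2 V} (hg : g ∈ M) (hg' : g' ∈ M) {v : V} (h1 : v ∈ g) (h2 : v ∈ g') : g = g' := by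
  by_contra hne
  exact hM.2 g hg g' hg' hne v h1 h2

lemma alternating_iff_list {G : SimpleGraph V} {M : Finset (Sym2 V)} {a b : V}
    {p : G.Walk a b} {l : List (Sym2 V)} (hl : p.edges = l) :
    Alternating M p ↔ ∀ (k : ℕ) (h : k < l.length), (l[k] ∈ M ↔ k % 2 = 1) := by
  subst hl; rfl

lemma altList_cons_cons {M : Finset (Sym2 V)} {e f : Sym2 V} {l : List (Sym2 V)}
    (he : e ∉ M) (hf : f ∈ M)
    (hl : ∀ (k : ℕ) (h : k < l.length), (l[k] ∈ M ↔ k % 2 = 1)) :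
    ∀ (k : ℕ) (h : k < (e :: f :: l).length), ((e :: f :: l)[k] ∈ M ↔ k % 2 = 1) := by
  intro k hk
  match k with
  | 0 => simpa using he
  | 1 => simpa using hf
  | (k+2) =>
    simp only [List.getElem_cons_succ]
    rw [hl k (by simpa using hk)]
    omega

lemma altList_reverse {M : Finset (Sym2 V)} {l : List (Sym2 V)} (hodd : l.length % 2 = 1)
    (hl : ∀ (k : ℕ) (h : k < l.length), (l[k] ∈ M ↔ k % 2 = 1)) :
    ∀ (k : ℕ) (h : k < l.reverse.length), (l.reverse[k] ∈ M ↔ k % 2 = 1) := by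
  intro k hk
  have hk' : k < l.length := by simpa using hk
  rw [List.getElem_reverse, hl _ (by omega)]
  omega

lemma mem_support_exists_edge {G : SimpleGraph V} {x y v : V} {p : G.Walk x y}
    (h0 : 0 < p.length) (hv : v ∈ p.support) : ∃ g ∈ p.edges, v ∈ g := by
  induction p with
  | nil => simp at h0
  | @cons u w z h q ih =>
    rcases (by simpa using hv : v = u ∨ v ∈ q.support) with rfl | hv'
    · exact ⟨s(v, w), by simp, by simp⟩
    · by_cases hq : 0 < q.length
      · obtain ⟨g, hg, hvg⟩ := ih hq hv'
        exact ⟨g, by simp [hg], hvg⟩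
      · have hq0 : q.length = 0 := by omega
        cases q with
        | nil =>
          have : v = w := by simpa using hv'
          exact ⟨s(u, w), by simp, by simp [this]⟩
        | cons h' r => simp at hq0

lemma end_mem_last_edge {G : SimpleGraph V} {x y : V} {p : G.Walk x y} (h0 : 0 < p.length) :
    ∀ (h : p.length - 1 < p.edges.length), y ∈ p.edges[p.length - 1] := by
  induction p with
  | nil => simp at h0
  | @cons u w z h q ih =>
    intro hh
    cases q with
    | nil => simp
    | @cons w' w'' z' h' r =>
      have h1 : 0 < (SimpleGraph.Walk.cons h' r).length := by simp
      have h2 := ih h1 (by simp)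
      have hlen : (SimpleGraph.Walk.cons h (SimpleGraph.Walk.cons h' r)).length - 1
          = ((SimpleGraph.Walk.cons h' r).length - 1) + 1 := by
        simp [SimpleGraph.Walk.length_cons]
      simp only [hlen, SimpleGraph.Walk.edges_cons, List.getElem_cons_succ]
      convert h2 using 2
      simp

lemma path_start_ne_end {G : SimpleGraph V} {x y : V} {p : G.Walk x y}
    (hp : p.IsPath) (h0 : 0 < p.length) : x ≠ y := by
  cases p with
  | nil => simp at h0
  | cons h q =>
    rw [SimpleGraph.Walk.cons_isPath_iff] at hp
    rintro rfl
    exact hp.2 q.end_mem_support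

theorem aux_exists_augPathS {V : Type*} [Fintype V] [DecidableEq V]
    (G : SimpleGraph V) (S : Set V) :
    ∀ (n : ℕ) (M M' : Finset (Sym2 V)), (M ∆ M').card ≤ n →
      IsMatching G M → IsMatching G M' → matchCount S M < matchCount S M' →
      ∃ (a b : V) (p : G.Walk a b), IsAugPathS G M S p ∧ ∀ e ∈ p.edges, e ∈ M ∆ M' := by
  intro n
  induction n with
  | zero =>
    intro M M' hcard hM hM' hcount
    have hMM : M = M' := by
      have h0 : M ∆ M' = ∅ := Finset.card_eq_zero.mp (Nat.le_zero.mp hcard)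
      simpa [symmDiff_eq_bot] using h0
    subst hMM
    omega
  | succ n ih =>
    intro M M' hcard hM hM' hcount
    -- pick a vertex a in S matched by M' but not by M
    obtain ⟨a, haS, haM', haM⟩ :
        ∃ a, a ∈ S ∧ Matches M' a ∧ ¬ Matches M a := by
      by_contra hcon
      push_neg at hcon
      have hsub : {v | v ∈ S ∧ Matches M' v} ⊆ {v | v ∈ S ∧ Matches M v} := by
        rintro v ⟨hvS, hvM'⟩
        exact ⟨hvS, hcon v hvS hvM'⟩
      have := Set.ncard_le_ncard hsub (Set.toFinite _)
      simp only [matchCount] at hcount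
      omega
    obtain ⟨e, heM', hae⟩ := haM'
    set c := Sym2.Mem.other' hae with hc
    have he : s(a, c) = e := Sym2.other_spec' hae
    have hadj_ac : G.Adj a c := by
      rw [← SimpleGraph.mem_edgeSet, he]
      exact hM'.1 heM'
    have hac : a ≠ c := hadj_ac.ne
    have hce : c ∈ e := by rw [← he]; simp
    have heM : e ∉ M := fun hmem => haM ⟨e, hmem, hae⟩
    have heD : e ∈ M ∆ M' := Finset.mem_symmDiff.mpr (Or.inr ⟨heM', heM⟩)
    by_cases hcM : Matches M c
    case neg =>
      -- single-edge augmenting path a - c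
      refine ⟨a, c, SimpleGraph.Walk.cons hadj_ac SimpleGraph.Walk.nil, ⟨?_, ?_, ?_, haM, haS, ?_⟩, ?_⟩
      · simp [hac]
      · simp
      · rw [alternating_iff_list (l := [e]) (by simp [he])]
        intro k hk
        have hk0 : k = 0 := by simp at hk; omega
        subst hk0
        simpa using heM
      · intro hmc; exact absurd hmc hcM
      · intro g hg
        simp [he] at hg
        subst hg
        exact heD
    case pos =>
      obtain ⟨f, hfM, hcf⟩ := hcM
      set d := Sym2.Mem.other' hcf with hd
      have hf : s(c, d) = f := Sym2.other_spec' hcf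
      have hadj_cd : G.Adj c d := by
        rw [← SimpleGraph.mem_edgeSet, hf]
        exact hM.1 hfM
      have hcd : c ≠ d := hadj_cd.ne
      have hdf : d ∈ f := by rw [← hf]; simp
      have hef : e ≠ f := fun hh => haM ⟨f, hfM, hh ▸ hae⟩
      have hfM' : f ∉ M' := fun hmem => hM'.2 e heM' f hmem hef c hce hcf
      have hda : d ≠ a := fun heq => haM ⟨f, hfM, heq ▸ hdf⟩
      have hfD : f ∈ M ∆ M' := Finset.mem_symmDiff.mpr (Or.inl ⟨hfM, hfM'⟩)
      by_cases hdS : d ∈ S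
      case neg =>
        -- two-edge augmenting path a - c - d
        refine ⟨a, d, SimpleGraph.Walk.cons hadj_ac (SimpleGraph.Walk.cons hadj_cd
          SimpleGraph.Walk.nil), ⟨?_, ?_, ?_, haM, haS, fun _ => hdS⟩, ?_⟩
        · simp [SimpleGraph.Walk.cons_isPath_iff, hac, hcd, hda.symm]
        · simp
        · rw [alternating_iff_list (l := [e, f]) (by simp [he, hf])]
          intro k hk
          have hk1 : k = 0 ∨ k = 1 := by simp at hk; omega
          rcases hk1 with rfl | rfl
          · simpa using heM
          · simpa using hfM
        · intro g hg
          simp [he, hf] at hg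
          rcases hg with rfl | rfl
          · exact heD
          · exact hfD
      case pos =>
        -- d ∈ S : swap f for e in M and induct
        set M₂ : Finset (Sym2 V) := insert e (M.erase f) with hM₂def
        have hM₂ : IsMatching G M₂ := by
          constructor
          · intro g hg
            rcases Finset.mem_insert.mp hg with rfl | hg'
            · exact hM'.1 heM'
            · exact hM.1 (Finset.mem_of_mem_erase hg')
          · intro g1 h1 g2 h2 hne v hv1 hv2
            rcases Finset.mem_insert.mp h1 with rfl | h1'
            · rcases Finset.mem_insert.mp h2 with rfl | h2'
              · exact hne rfl
              · have hg2M := Finset.mem_of_mem_erase h2'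
                have hvac : v = a ∨ v = c := by rw [← he] at hv1; simpa using hv1
                rcases hvac with rfl | rfl
                · exact haM ⟨g2, hg2M, hv2⟩
                · exact Finset.ne_of_mem_erase h2' (hM.eq_of_mem hg2M hfM hv2 hcf)
            · rcases Finset.mem_insert.mp h2 with rfl | h2'
              · have hg1M := Finset.mem_of_mem_erase h1'
                have hvac : v = a ∨ v = c := by rw [← he] at hv2; simpa using hv2
                rcases hvac with rfl | rfl
                · exact haM ⟨g1, hg1M, hv1⟩
                · exact Finset.ne_of_mem_erase h1' (hM.eq_of_mem hg1M hfM hv1 hcf)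
              · exact hM.2 _ (Finset.mem_of_mem_erase h1') _ (Finset.mem_of_mem_erase h2')
                  hne v hv1 hv2
        have hM2_to_M : ∀ v, Matches M₂ v → v = a ∨ Matches M v := by
          rintro v ⟨g, hg, hvg⟩
          rcases Finset.mem_insert.mp hg with rfl | hg'
          · have hvac : v = a ∨ v = c := by rw [← he] at hvg; simpa using hvg
            rcases hvac with rfl | rfl
            · exact Or.inl rfl
            · exact Or.inr ⟨f, hfM, hcf⟩
          · exact Or.inr ⟨g, Finset.mem_of_mem_erase hg', hvg⟩
        have hM_to_M2 : ∀ v, v ≠ d → Matches M v → Matches M₂ v := by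
          rintro v hvd ⟨g, hg, hvg⟩
          by_cases hgf : g = f
          · subst hgf
            have hvcd : v = c ∨ v = d := by rw [← hf] at hvg; simpa using hvg
            rcases hvcd with rfl | rfl
            · exact ⟨e, Finset.mem_insert_self _ _, hce⟩
            · exact absurd rfl hvd
          · exact ⟨g, Finset.mem_insert_of_mem (Finset.mem_erase.mpr ⟨hgf, hg⟩), hvg⟩
        have hdM₂ : ¬ Matches M₂ d := by
          rintro ⟨g, hg, hdg⟩
          rcases Finset.mem_insert.mp hg with rfl | hg'
          · have hdac : d = a ∨ d = c := by rw [← he] at hdg; simpa using hdg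
            rcases hdac with h1 | h1
            · exact hda h1
            · exact hcd h1.symm
          · exact Finset.ne_of_mem_erase hg'
              (hM.eq_of_mem (Finset.mem_of_mem_erase hg') hfM hdg hdf)
        have hMC2 : matchCount S M₂ = matchCount S M := by
          have hset : {v | v ∈ S ∧ Matches M₂ v}
              = insert a ({v | v ∈ S ∧ Matches M v} \ {d}) := by
            ext v
            simp only [Set.mem_setOf_eq, Set.mem_insert_iff, Set.mem_diff,
              Set.mem_singleton_iff]
            constructor
            · rintro ⟨hvS, hvM2⟩
              rcases hM2_to_M v hvM2 with rfl | hvM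
              · exact Or.inl rfl
              · refine Or.inr ⟨⟨hvS, hvM⟩, ?_⟩
                intro hveq
                exact hdM₂ (hveq ▸ hvM2)
            · rintro (rfl | ⟨⟨hvS, hvM⟩, hvd⟩)
              · exact ⟨haS, e, Finset.mem_insert_self _ _, hae⟩
              · exact ⟨hvS, hM_to_M2 v hvd hvM⟩
          have hdX : d ∈ {v | v ∈ S ∧ Matches M v} := ⟨hdS, f, hfM, hdf⟩
          have haX : a ∉ {v | v ∈ S ∧ Matches M v} \ {d} := fun h => haM h.1.2
          unfold matchCount
          rw [hset, Set.ncard_insert_of_notMem haX (Set.toFinite _)]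
          exact Set.ncard_diff_singleton_add_one hdX (Set.toFinite _)
        have hsub : M₂ ∆ M' ⊆ (M ∆ M').erase e := by
          intro g hg
          rw [Finset.mem_symmDiff] at hg
          rw [Finset.mem_erase, Finset.mem_symmDiff]
          rcases hg with ⟨hg2, hgM'⟩ | ⟨hgM', hg2⟩
          · rcases Finset.mem_insert.mp hg2 with rfl | hg'
            · exact absurd heM' hgM'
            · exact ⟨fun hh => hgM' (hh ▸ heM'),
                Or.inl ⟨Finset.mem_of_mem_erase hg', hgM'⟩⟩
          · have hge : g ≠ e := fun hh => hg2 (hh ▸ Finset.mem_insert_self e _)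
            have hgM : g ∉ M := by
              intro hgM
              by_cases hgf : g = f
              · exact hfM' (hgf ▸ hgM')
              · exact hg2 (Finset.mem_insert_of_mem (Finset.mem_erase.mpr ⟨hgf, hgM⟩))
            exact ⟨hge, Or.inr ⟨hgM', hgM⟩⟩
        have hcard2 : (M₂ ∆ M').card ≤ n := by
          have h1 := Finset.card_le_card hsub
          rw [Finset.card_erase_of_mem heD] at h1
          have h2 : 1 ≤ (M ∆ M').card := Finset.card_pos.mpr ⟨e, heD⟩
          omega
        obtain ⟨a₂, b₂, p, ⟨hp_path, hp_len, hp_alt, hp_na, hp_aS, hp_b⟩, hp_edges⟩ :=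
          ih M₂ M' hcard2 hM₂ hM' (by omega)
        have hEF : ∀ g ∈ p.edges, g ∈ M ∆ M' ∧ (g ∈ M₂ ↔ g ∈ M) := by
          intro g hg
          have hgD := hp_edges g hg
          rw [Finset.mem_symmDiff] at hgD
          rcases hgD with ⟨hg2, hgM'⟩ | ⟨hgM', hg2⟩
          · rcases Finset.mem_insert.mp hg2 with rfl | hg'
            · exact absurd heM' hgM'
            · have hgM := Finset.mem_of_mem_erase hg'
              exact ⟨Finset.mem_symmDiff.mpr (Or.inl ⟨hgM, hgM'⟩), by simp [hg2, hgM]⟩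
          · have hgM : g ∉ M := by
              intro hgM
              by_cases hgf : g = f
              · exact hfM' (hgf ▸ hgM')
              · exact hg2 (Finset.mem_insert_of_mem (Finset.mem_erase.mpr ⟨hgf, hgM⟩))
            exact ⟨Finset.mem_symmDiff.mpr (Or.inr ⟨hgM', hgM⟩), by simp [hg2, hgM]⟩
        have haP : a ∉ p.support := by
          intro hsup
          obtain ⟨g, hg, hag⟩ := mem_support_exists_edge hp_len hsup
          have hgD := hp_edges g hg
          rw [Finset.mem_symmDiff] at hgD
          rcases hgD with ⟨hg2, hgM'⟩ | ⟨hgM', hg2⟩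
          · rcases Finset.mem_insert.mp hg2 with rfl | hg'
            · exact hgM' heM'
            · exact haM ⟨g, Finset.mem_of_mem_erase hg', hag⟩
          · have hgee : g = e := hM'.eq_of_mem hgM' heM' hag hae
            exact hg2 (hgee ▸ Finset.mem_insert_self e _)
        have hcP : c ∉ p.support := by
          intro hsup
          obtain ⟨g, hg, hcg⟩ := mem_support_exists_edge hp_len hsup
          have hgD := hp_edges g hg
          rw [Finset.mem_symmDiff] at hgD
          rcases hgD with ⟨hg2, hgM'⟩ | ⟨hgM', hg2⟩
          · rcases Finset.mem_insert.mp hg2 with rfl | hg'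
            · exact hgM' heM'
            · exact Finset.ne_of_mem_erase hg'
                (hM.eq_of_mem (Finset.mem_of_mem_erase hg') hfM hcg hcf)
          · have hgee : g = e := hM'.eq_of_mem hgM' heM' hcg hce
            exact hg2 (hgee ▸ Finset.mem_insert_self e _)
        have hplist : ∀ (k : ℕ) (hkk : k < p.edges.length), (p.edges[k] ∈ M ↔ k % 2 = 1) := by
          intro k hk
          have hmem : p.edges[k] ∈ p.edges := List.getElem_mem _
          rw [← (hEF _ hmem).2]
          exact (alternating_iff_list rfl).mp hp_alt k hk
        have h_na_M : ∀ v, v ≠ d → ¬ Matches M₂ v → ¬ Matches M v :=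
          fun v hvd h2 hv => h2 (hM_to_M2 v hvd hv)
        have h_b_M : ∀ v, v ≠ d → (Matches M₂ v → v ∉ S) → Matches M v → v ∉ S :=
          fun v hvd h2 hv => h2 (hM_to_M2 v hvd hv)
        by_cases ha2d : a₂ = d
        · -- prepend a - c - d to p
          subst ha2d
          have hbd : b₂ ≠ d := (path_start_ne_end hp_path hp_len).symm
          refine ⟨a, b₂, SimpleGraph.Walk.cons hadj_ac (SimpleGraph.Walk.cons hadj_cd p),
            ⟨?_, ?_, ?_, haM, haS, h_b_M b₂ hbd hp_b⟩, ?_⟩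
          · rw [SimpleGraph.Walk.cons_isPath_iff, SimpleGraph.Walk.cons_isPath_iff]
            refine ⟨⟨hp_path, hcP⟩, ?_⟩
            simp only [SimpleGraph.Walk.support_cons, List.mem_cons, not_or]
            exact ⟨hac, haP⟩
          · simp
          · rw [alternating_iff_list (l := e :: f :: p.edges) (by simp [he, hf])]
            exact altList_cons_cons heM hfM hplist
          · intro g hg
            simp only [SimpleGraph.Walk.edges_cons, he, hf, List.mem_cons] at hg
            rcases hg with rfl | rfl | hg
            · exact heD
            · exact hfD
            · exact (hEF g hg).1
        · by_cases hb2d : b₂ = d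
          · -- append d - c - a (via reverses)
            subst hb2d
            have hidx : p.length - 1 < p.edges.length := by
              rw [SimpleGraph.Walk.length_edges]; omega
            have hdlast := end_mem_last_edge hp_len hidx
            have hlast2 : p.edges[p.length - 1] ∉ M₂ := fun hh => hdM₂ ⟨_, hh, hdlast⟩
            have hodd : p.length % 2 = 1 := by
              have halt1 := (alternating_iff_list rfl).mp hp_alt (p.length - 1) hidx
              have hne1 : ¬ ((p.length - 1) % 2 = 1) := fun hh => hlast2 (halt1.mpr hh)
              omega
            have hoddE : p.edges.length % 2 = 1 := by
              rw [SimpleGraph.Walk.length_edges]; exact hodd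
            refine ⟨a₂, a, (SimpleGraph.Walk.cons hadj_ac
              (SimpleGraph.Walk.cons hadj_cd p.reverse)).reverse,
              ⟨?_, ?_, ?_, h_na_M a₂ ha2d hp_na, hp_aS, fun hma => absurd hma haM⟩, ?_⟩
            · rw [SimpleGraph.Walk.isPath_reverse_iff, SimpleGraph.Walk.cons_isPath_iff,
                SimpleGraph.Walk.cons_isPath_iff, SimpleGraph.Walk.isPath_reverse_iff]
              refine ⟨⟨hp_path, by
                simpa only [SimpleGraph.Walk.support_reverse, List.mem_reverse] using hcP⟩, ?_⟩
              simp only [SimpleGraph.Walk.support_cons, List.mem_cons, not_or,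
                SimpleGraph.Walk.support_reverse, List.mem_reverse]
              exact ⟨hac, haP⟩
            · simp
            · have hql : (SimpleGraph.Walk.cons hadj_ac
                  (SimpleGraph.Walk.cons hadj_cd p.reverse)).reverse.edges
                  = (e :: f :: p.edges.reverse).reverse := by
                simp only [SimpleGraph.Walk.edges_reverse, SimpleGraph.Walk.edges_cons]
                rw [show s(a, c) = e from he, show s(c, d) = f from hf]
              rw [alternating_iff_list hql]
              apply altList_reverse (by simp; omega)
              exact altList_cons_cons heM hfM (altList_reverse hoddE hplist)
            · intro g hg
              simp only [SimpleGraph.Walk.edges_reverse, SimpleGraph.Walk.edges_cons,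
                List.mem_reverse, List.mem_cons, he, hf] at hg
              rcases hg with rfl | rfl | hg
              · exact heD
              · exact hfD
              · exact (hEF g hg).1
          · -- p itself works
            refine ⟨a₂, b₂, p, ⟨hp_path, hp_len, ?_, h_na_M a₂ ha2d hp_na, hp_aS,
              h_b_M b₂ hb2d hp_b⟩, fun g hg => (hEF g hg).1⟩
            rw [alternating_iff_list rfl]
            exact hplist


/-- if the count of `M` is smaller than the count of `M'`, then `G`
contains an augmenting path with respect to `M` and `S`, all of whose edges lie
in the symmetric difference `M ∆ M'`. -/
theorem exists_augPathS_of_count_lt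
    {V : Type*} [Fintype V] [DecidableEq V] (G : SimpleGraph V) (S : Set V)
    (M M' : Finset (Sym2 V)) (hM : IsMatching G M) (hM' : IsMatching G M')
    (h : matchCount S M < matchCount S M') :
    ∃ (a b : V) (p : G.Walk a b),
      IsAugPathS G M S p ∧ ∀ e ∈ p.edges, e ∈ M ∆ M' :=
  aux_exists_augPathS G S ((M ∆ M').card) M M' le_rfl hM hM' h
end

section
/- Let G be a finite simple graph and S a set of vertices of G. Then there exists a matching M of G that simultaneously has maximum count (no matching of G matches more vertices of S) and maximum size (no matching of G has more edges). -/
variable {V : Type*}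

section Aux

open SimpleGraph

open scoped Classical

/-- Reachability in the graph generated by a finite edge set. -/
private def RE (E : Finset (Sym2 V)) (u v : V) : Prop :=
  (SimpleGraph.fromEdgeSet (↑E : Set (Sym2 V))).Reachable u v

private lemma re_refl (E : Finset (Sym2 V)) (u : V) : RE E u u := Reachable.refl _

private lemma re_trans {E : Finset (Sym2 V)} {u v w : V} (h1 : RE E u v) (h2 : RE E v w) :
    RE E u w := Reachable.trans h1 h2

private lemma re_symm {E : Finset (Sym2 V)} {u v : V} (h : RE E u v) : RE E v u :=
  Reachable.symm h

private lemma re_adj {E : Finset (Sym2 V)} {a b : V} (h : s(a, b) ∈ E) (hne : a ≠ b) :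
    RE E a b :=
  SimpleGraph.Adj.reachable (by rw [SimpleGraph.fromEdgeSet_adj]; exact ⟨by simpa using h, hne⟩)

/-- If `u` reaches `w` with `u ≠ w`, there is an edge at `u`. -/
private lemma exists_first_edge {E : Finset (Sym2 V)} {u w : V} (h : RE E u w) (hne : u ≠ w) :
    ∃ x, s(u, x) ∈ E ∧ u ≠ x := by
  obtain ⟨p⟩ := h
  cases p with
  | nil => exact absurd rfl hne
  | cons hab p =>
    rename_i b
    rw [SimpleGraph.fromEdgeSet_adj] at hab
    exact ⟨b, by simpa using hab.1, hab.2⟩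

/-- Everything reachable from `u` is reachable using only edges whose endpoints are
reachable from `u`. -/
private lemma reach_filter {E F : Finset (Sym2 V)} (u : V)
    (hF : ∀ f ∈ E, (∀ v ∈ f, RE E u v) → f ∈ F) :
    ∀ {x w : V}, (SimpleGraph.fromEdgeSet (↑E : Set (Sym2 V))).Walk x w → RE E u x →
      RE F x w := by
  intro x w p
  induction p with
  | nil => intro _; exact re_refl _ _
  | cons hab p ih =>
    rename_i a b c
    intro hua
    have hab' := hab
    rw [SimpleGraph.fromEdgeSet_adj] at hab'
    have habE : s(a, b) ∈ E := by simpa using hab'.1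
    have hub : RE E u b := re_trans hua (re_adj habE hab'.2)
    have hmem : s(a, b) ∈ F := by
      refine hF _ habE ?_
      intro v hv
      rcases Sym2.mem_iff.mp hv with rfl | rfl
      · exact hua
      · exact hub
    exact re_trans (re_adj hmem hab'.2) (ih hub)

/-- Splitting reachability when one edge is erased. -/
private lemma reach_erase {E : Finset (Sym2 V)} {u1 u2 : V} {u w : V} (h : RE E u w) :
    RE (E.erase s(u1, u2)) u w ∨
      ((RE (E.erase s(u1, u2)) u u1 ∨ RE (E.erase s(u1, u2)) u u2) ∧
        (RE (E.erase s(u1, u2)) w u1 ∨ RE (E.erase s(u1, u2)) w u2)) := by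
  obtain ⟨p⟩ := h
  induction p with
  | nil => exact Or.inl (re_refl _ _)
  | cons hab p ih =>
    rename_i a b c
    rw [SimpleGraph.fromEdgeSet_adj] at hab
    have habE : s(a, b) ∈ E := by simpa using hab.1
    by_cases he : s(a, b) = s(u1, u2)
    · rw [Sym2.eq_iff] at he
      have hupart : RE (E.erase s(u1, u2)) a u1 ∨ RE (E.erase s(u1, u2)) a u2 := by
        rcases he with ⟨ha, _⟩ | ⟨ha, _⟩
        · exact Or.inl (ha ▸ re_refl _ _)
        · exact Or.inr (ha ▸ re_refl _ _)
      have hbpart : RE (E.erase s(u1, u2)) b u1 ∨ RE (E.erase s(u1, u2)) b u2 := by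
        rcases he with ⟨_, hb⟩ | ⟨_, hb⟩
        · exact Or.inr (hb ▸ re_refl _ _)
        · exact Or.inl (hb ▸ re_refl _ _)
      have hwpart : RE (E.erase s(u1, u2)) c u1 ∨ RE (E.erase s(u1, u2)) c u2 := by
        rcases ih with h1 | h2
        · rcases hbpart with hb | hb
          · exact Or.inl (re_trans (re_symm h1) hb)
          · exact Or.inr (re_trans (re_symm h1) hb)
        · exact h2.2
      exact Or.inr ⟨hupart, hwpart⟩
    · have hadj' : RE (E.erase s(u1, u2)) a b :=
        re_adj (Finset.mem_erase.mpr ⟨he, habE⟩) hab.2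
      rcases ih with h1 | ⟨hb, hc⟩
      · exact Or.inl (re_trans hadj' h1)
      · refine Or.inr ⟨?_, hc⟩
        rcases hb with h | h
        · exact Or.inl (re_trans hadj' h)
        · exact Or.inr (re_trans hadj' h)

/-- A finite set of vertices all reachable from a single vertex `u` using the edges
of `E` has at most `E.card + 1` elements. -/
private lemma card_le_conn [Fintype V] :
    ∀ (E : Finset (Sym2 V)) (u : V) (W : Finset V), (∀ w ∈ W, RE E u w) →
      W.card ≤ E.card + 1 := by
  intro E
  induction E using Finset.strongInduction with
  | _ E ih =>
  intro u W hW
  by_cases hW1 : W.card ≤ 1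
  · exact le_trans hW1 (Nat.le_add_left 1 _)
  push_neg at hW1
  obtain ⟨w1, hw1, w2, hw2, hne⟩ := Finset.one_lt_card.mp hW1
  have hex : ∃ w ∈ W, w ≠ u := by
    by_cases h : w1 = u
    · exact ⟨w2, hw2, by rw [← h]; exact fun hh => hne hh.symm⟩
    · exact ⟨w1, hw1, h⟩
  obtain ⟨w0, hw0, hw0u⟩ := hex
  obtain ⟨x, hxE, hxu⟩ := exists_first_edge (hW w0 hw0) (Ne.symm hw0u)
  set E' := E.erase s(u, x) with hE'
  have hE'ss : E' ⊂ E := Finset.erase_ssubset hxE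
  have hE'card : E'.card + 1 = E.card := Finset.card_erase_add_one hxE
  have hsplit : ∀ w ∈ W, RE E' u w ∨ RE E' x w := by
    intro w hw
    rcases reach_erase (u1 := u) (u2 := x) (hW w hw) with h | ⟨_, hw2⟩
    · exact Or.inl h
    · rcases hw2 with h | h
      · exact Or.inl (re_symm h)
      · exact Or.inr (re_symm h)
  have htrans : ∀ (y : V), ∀ w, RE E' y w →
      RE (E'.filter (fun f => ∀ v ∈ f, RE E' y v)) y w := by
    intro y w h
    obtain ⟨p⟩ := h
    exact reach_filter y (fun f hf hv => Finset.mem_filter.mpr ⟨hf, hv⟩) p (re_refl _ _)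
  by_cases hux : RE E' u x
  · have hW' : ∀ w ∈ W, RE (E'.filter (fun f => ∀ v ∈ f, RE E' u v)) u w := by
      intro w hw
      rcases hsplit w hw with h | h
      · exact htrans u w h
      · exact htrans u w (re_trans hux h)
    have h1 : W.card ≤ (E'.filter (fun f => ∀ v ∈ f, RE E' u v)).card + 1 :=
      ih _ (lt_of_le_of_lt (Finset.filter_subset _ _) hE'ss) u W hW'
    have h2 : (E'.filter (fun f => ∀ v ∈ f, RE E' u v)).card ≤ E'.card :=
      Finset.card_filter_le _ _
    omega
  · set E1 := E'.filter (fun f => ∀ v ∈ f, RE E' u v) with hE1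
    set E2 := E'.filter (fun f => ∀ v ∈ f, RE E' x v) with hE2
    set W1 := W.filter (fun w => RE E' u w) with hW1'
    set W2 := W.filter (fun w => RE E' x w) with hW2'
    have hWsub : W ⊆ W1 ∪ W2 := by
      intro w hw
      rcases hsplit w hw with h | h
      · exact Finset.mem_union_left _ (Finset.mem_filter.mpr ⟨hw, h⟩)
      · exact Finset.mem_union_right _ (Finset.mem_filter.mpr ⟨hw, h⟩)
    have hb1 : W1.card ≤ E1.card + 1 := by
      refine ih _ (lt_of_le_of_lt (Finset.filter_subset _ _) hE'ss) u W1 ?_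
      intro w hw
      exact htrans u w (Finset.mem_filter.mp hw).2
    have hb2 : W2.card ≤ E2.card + 1 := by
      refine ih _ (lt_of_le_of_lt (Finset.filter_subset _ _) hE'ss) x W2 ?_
      intro w hw
      exact htrans x w (Finset.mem_filter.mp hw).2
    have hEdisj : Disjoint E1 E2 := by
      rw [Finset.disjoint_left]
      intro f hf1 hf2
      have h1 := (Finset.mem_filter.mp hf1).2
      have h2 := (Finset.mem_filter.mp hf2).2
      exact hux (re_trans (h1 f.out.1 (Sym2.out_fst_mem f))
        (re_symm (h2 f.out.1 (Sym2.out_fst_mem f))))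
    have hEun : E1.card + E2.card ≤ E'.card := by
      rw [← Finset.card_union_of_disjoint hEdisj]
      exact Finset.card_le_card (Finset.union_subset (Finset.filter_subset _ _)
        (Finset.filter_subset _ _))
    have hWcard : W.card ≤ W1.card + W2.card :=
      le_trans (Finset.card_le_card hWsub) (Finset.card_union_le _ _)
    omega

private lemma matches_def {M : Finset (Sym2 V)} {v : V} :
    Matches M v ↔ ∃ e ∈ M, v ∈ e := Iff.rfl

/-- The key exchange lemma: if `M'` is a bigger matching than `M`, then there is a
matching strictly bigger than `M` matching every vertex that `M` matches. -/
private lemma exists_bigger [Fintype V] {G : SimpleGraph V} {M M' : Finset (Sym2 V)}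
    (hM : IsMatching G M) (hM' : IsMatching G M') (hcard : M.card < M'.card) :
    ∃ N : Finset (Sym2 V), IsMatching G N ∧ M.card < N.card ∧
      ∀ v, Matches M v → Matches N v := by
  set D := (M \ M') ∪ (M' \ M) with hD
  have hDmem : ∀ e ∈ D, e ∈ G.edgeSet := by
    intro e he
    rcases Finset.mem_union.mp he with h | h
    · exact hM.1 (Finset.mem_coe.mpr (Finset.mem_sdiff.mp h).1)
    · exact hM'.1 (Finset.mem_coe.mpr (Finset.mem_sdiff.mp h).1)
  have hDnd : ∀ e ∈ D, ¬ e.IsDiag := fun e he =>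
    SimpleGraph.not_isDiag_of_mem_edgeSet G (hDmem e he)
  set H := SimpleGraph.fromEdgeSet (↑D : Set (Sym2 V)) with hH
  have hadj : ∀ e ∈ D, ∀ v ∈ e, ∀ w ∈ e, v = w ∨ H.Adj v w := by
    intro e he
    induction e using Sym2.ind with
    | _ a b =>
      intro v hv w hw
      rcases Sym2.mem_iff.mp hv with rfl | rfl <;> rcases Sym2.mem_iff.mp hw with rfl | rfl
      · exact Or.inl rfl
      · refine Or.inr ?_
        rw [hH, SimpleGraph.fromEdgeSet_adj]
        exact ⟨by simpa using he, fun hvw => hDnd _ he (by simp [Sym2.isDiag_iff_proj_eq, hvw])⟩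
      · refine Or.inr ?_
        rw [hH, SimpleGraph.fromEdgeSet_adj]
        refine ⟨by simpa [Sym2.eq_swap] using he, fun hvw => hDnd _ he ?_⟩
        simp [Sym2.isDiag_iff_proj_eq, hvw]
      · exact Or.inl rfl
  have hREeq : ∀ u v : V, H.Reachable u v ↔ RE D u v := fun u v => Iff.rfl
  -- the component of each edge of `D`
  set ckey : Sym2 V → H.ConnectedComponent := fun e => H.connectedComponentMk e.out.1
    with hckey
  have hkey : ∀ e ∈ D, ∀ v ∈ e, ckey e = H.connectedComponentMk v := by
    intro e he v hv
    rcases hadj e he e.out.1 (Sym2.out_fst_mem e) v hv with h | h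
    · exact congrArg H.connectedComponentMk h
    · exact SimpleGraph.ConnectedComponent.sound h.reachable
  -- find a component where `M' \ M` has more edges than `M \ M'`
  have hMM' : (M \ M').card < (M' \ M).card := by
    have h1 := Finset.card_sdiff_add_card_inter M M'
    have h2 := Finset.card_sdiff_add_card_inter M' M
    rw [Finset.inter_comm] at h2
    omega
  have hfib : ∀ (X : Finset (Sym2 V)), X ⊆ D →
      X.card = ∑ c : H.ConnectedComponent, (X.filter (fun e => ckey e = c)).card := by
    intro X hX
    exact Finset.card_eq_sum_card_fiberwise (fun e _ => Finset.mem_univ _)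
  have hex : ∃ c : H.ConnectedComponent,
      ((M \ M').filter (fun e => ckey e = c)).card <
        ((M' \ M).filter (fun e => ckey e = c)).card := by
    by_contra hcon
    push_neg at hcon
    have h1 : (M' \ M).card ≤ (M \ M').card := by
      rw [hfib (M' \ M) Finset.subset_union_right, hfib (M \ M') Finset.subset_union_left]
      exact Finset.sum_le_sum (fun c _ => hcon c)
    omega
  obtain ⟨c, hc⟩ := hex
  set C := D.filter (fun e => ckey e = c) with hCdef
  have hCD : C ⊆ D := Finset.filter_subset _ _
  -- basic membership facts about C
  have hCin : ∀ e ∈ D, ∀ v ∈ e, H.connectedComponentMk v = c → e ∈ C := by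
    intro e he v hv hvc
    exact Finset.mem_filter.mpr ⟨he, (hkey e he v hv).trans hvc⟩
  have hCcomp : ∀ e ∈ C, ∀ v ∈ e, H.connectedComponentMk v = c := by
    intro e he v hv
    have := Finset.mem_filter.mp he
    rw [← (hkey e this.1 v hv)]
    exact this.2
  have hCMeq : C.filter (fun e => e ∈ M) = (M \ M').filter (fun e => ckey e = c) := by
    ext e
    simp only [hCdef, Finset.mem_filter, hD, Finset.mem_union, Finset.mem_sdiff]
    tauto
  have hCM'eq : C.filter (fun e => e ∉ M) = (M' \ M).filter (fun e => ckey e = c) := by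
    ext e
    simp only [hCdef, Finset.mem_filter, hD, Finset.mem_union, Finset.mem_sdiff]
    tauto
  have hcc : (C.filter (fun e => e ∈ M)).card < (C.filter (fun e => e ∉ M)).card := by
    rw [hCMeq, hCM'eq]; exact hc
  have hCM'sub : ∀ e ∈ C, e ∉ M → e ∈ M' := by
    intro e he hem
    rcases Finset.mem_union.mp (hCD he) with h | h
    · exact absurd (Finset.mem_sdiff.mp h).1 hem
    · exact (Finset.mem_sdiff.mp h).1
  -- the new matching
  set N := (M \ C) ∪ (C \ M) with hNdef
  have hNmem : ∀ e, e ∈ N ↔ (e ∈ M ∧ e ∉ C) ∨ (e ∈ C ∧ e ∉ M) := by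
    intro e
    simp only [hNdef, Finset.mem_union, Finset.mem_sdiff]
  have hNM : IsMatching G N := by
    constructor
    · intro e he
      rcases (hNmem e).mp (Finset.mem_coe.mp he) with h | h
      · exact hM.1 (Finset.mem_coe.mpr h.1)
      · exact hM'.1 (Finset.mem_coe.mpr (hCM'sub e h.1 h.2))
    · intro e he f hf hef v hve hvf
      rcases (hNmem e).mp he with ⟨heM, heC⟩ | ⟨heC, heM⟩ <;>
        rcases (hNmem f).mp hf with ⟨hfM, hfC⟩ | ⟨hfC, hfM⟩
      · exact hM.2 e heM f hfM hef v hve hvf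
      · -- e ∈ M \ C, f ∈ C \ M
        by_cases heM' : e ∈ M'
        · exact hM'.2 e heM' f (hCM'sub f hfC hfM) hef v hve hvf
        · have heD : e ∈ D := Finset.mem_union_left _ (Finset.mem_sdiff.mpr ⟨heM, heM'⟩)
          exact heC (hCin e heD v hve (hCcomp f hfC v hvf))
      · by_cases hfM' : f ∈ M'
        · exact hM'.2 e (hCM'sub e heC heM) f hfM' hef v hve hvf
        · have hfD : f ∈ D := Finset.mem_union_left _ (Finset.mem_sdiff.mpr ⟨hfM, hfM'⟩)
          exact hfC (hCin f hfD v hvf (hCcomp e heC v hve))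
      · exact hM'.2 e (hCM'sub e heC heM) f (hCM'sub f hfC hfM) hef v hve hvf
  -- cardinality
  have hMCeq : M ∩ C = C.filter (fun e => e ∈ M) := by
    ext e
    simp only [Finset.mem_inter, Finset.mem_filter]
    tauto
  have hCMdiff : C \ M = C.filter (fun e => e ∉ M) := by
    ext e
    simp only [Finset.mem_sdiff, Finset.mem_filter]
  have hNcard : M.card < N.card := by
    have hdisj : Disjoint (M \ C) (C \ M) := by
      rw [Finset.disjoint_left]
      intro e he1 he2
      exact (Finset.mem_sdiff.mp he2).2 (Finset.mem_sdiff.mp he1).1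
    have h1 : N.card = (M \ C).card + (C \ M).card := by
      rw [hNdef]; exact Finset.card_union_of_disjoint hdisj
    have h2 : (M \ C).card + (M ∩ C).card = M.card := Finset.card_sdiff_add_card_inter M C
    have h3 : (M ∩ C).card < (C \ M).card := by
      rw [hMCeq, hCMdiff]; exact hcc
    omega
  refine ⟨N, hNM, hNcard, ?_⟩
  -- every vertex matched by M is matched by N
  -- counting within the component c
  have hCne : (C.filter (fun e => e ∉ M)).Nonempty := by
    rw [← Finset.card_pos]; omega
  obtain ⟨e0, he0⟩ := hCne
  have he0C : e0 ∈ C := (Finset.mem_filter.mp he0).1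
  set u0 := e0.out.1 with hu0
  have hu0c : H.connectedComponentMk u0 = c := hCcomp e0 he0C u0 (Sym2.out_fst_mem e0)
  set W := Finset.univ.filter (fun v => H.connectedComponentMk v = c) with hW
  have hWreach : ∀ w ∈ W, RE C u0 w := by
    intro w hw
    have hreach : H.Reachable u0 w := by
      apply SimpleGraph.ConnectedComponent.exact
      rw [hu0c, (Finset.mem_filter.mp hw).2]
    obtain ⟨p⟩ := hreach
    refine reach_filter (E := D) u0 ?_ p (re_refl _ _)
    intro f hf hv
    refine hCin f hf f.out.1 (Sym2.out_fst_mem f) ?_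
    have : H.Reachable u0 f.out.1 := hv f.out.1 (Sym2.out_fst_mem f)
    rw [← hu0c]
    exact (SimpleGraph.ConnectedComponent.sound this).symm
  have hWcard : W.card ≤ C.card + 1 := card_le_conn C u0 W hWreach
  -- endpoint sets
  have hends : ∀ e : Sym2 V, ¬ e.IsDiag → (Finset.univ.filter (fun v => v ∈ e)).card = 2 := by
    intro e
    induction e using Sym2.ind with
    | _ a b =>
      intro hnd
      have hab : a ≠ b := fun h => hnd (by simp [Sym2.isDiag_iff_proj_eq, h])
      have : Finset.univ.filter (fun v => v ∈ s(a, b)) = {a, b} := by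
        ext v
        simp [Sym2.mem_iff]
      rw [this, Finset.card_insert_of_notMem (by simpa using hab), Finset.card_singleton]
  set A := (C.filter (fun e => e ∈ M)).biUnion
      (fun e => Finset.univ.filter (fun v => v ∈ e)) with hA
  set Bb := (C.filter (fun e => e ∉ M)).biUnion
      (fun e => Finset.univ.filter (fun v => v ∈ e)) with hBb
  have hAW : A ⊆ W := by
    intro v hv
    obtain ⟨e, he, hve⟩ := Finset.mem_biUnion.mp hv
    have heC := (Finset.mem_filter.mp he).1
    exact Finset.mem_filter.mpr ⟨Finset.mem_univ _,
      hCcomp e heC v (Finset.mem_filter.mp hve).2⟩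
  have hBW : Bb ⊆ W := by
    intro v hv
    obtain ⟨e, he, hve⟩ := Finset.mem_biUnion.mp hv
    have heC := (Finset.mem_filter.mp he).1
    exact Finset.mem_filter.mpr ⟨Finset.mem_univ _,
      hCcomp e heC v (Finset.mem_filter.mp hve).2⟩
  have hAcard : A.card = 2 * (C.filter (fun e => e ∈ M)).card := by
    rw [hA, Finset.card_biUnion, Finset.sum_congr rfl
      (fun e he => hends e (hDnd e (hCD (Finset.mem_filter.mp he).1)))]
    · simp [Finset.sum_const, mul_comm]
    · intro e he f hf hef
      rw [Function.onFun, Finset.disjoint_left]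
      intro v hv1 hv2
      exact hM.2 e (Finset.mem_filter.mp he).2 f (Finset.mem_filter.mp hf).2 hef v
        (Finset.mem_filter.mp hv1).2 (Finset.mem_filter.mp hv2).2
  have hBcard : Bb.card = 2 * (C.filter (fun e => e ∉ M)).card := by
    rw [hBb, Finset.card_biUnion, Finset.sum_congr rfl
      (fun e he => hends e (hDnd e (hCD (Finset.mem_filter.mp he).1)))]
    · simp [Finset.sum_const, mul_comm]
    · intro e he f hf hef
      rw [Function.onFun, Finset.disjoint_left]
      intro v hv1 hv2
      have heC := Finset.mem_filter.mp he
      have hfC := Finset.mem_filter.mp hf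
      exact hM'.2 e (hCM'sub e heC.1 heC.2) f (hCM'sub f hfC.1 hfC.2) hef v
        (Finset.mem_filter.mp hv1).2 (Finset.mem_filter.mp hv2).2
  have hCsplit : (C.filter (fun e => e ∈ M)).card + (C.filter (fun e => e ∉ M)).card
      = C.card := Finset.card_filter_add_card_filter_not (fun e => e ∈ M)
  -- A ⊆ Bb
  have hAB : A ⊆ Bb := by
    have h1 : (A ∪ Bb).card ≤ W.card :=
      Finset.card_le_card (Finset.union_subset hAW hBW)
    have h2 : (A ∪ Bb).card + (A ∩ Bb).card = A.card + Bb.card :=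
      Finset.card_union_add_card_inter A Bb
    have h3 : A.card ≤ (A ∩ Bb).card := by omega
    have h4 : A ∩ Bb = A :=
      Finset.eq_of_subset_of_card_le Finset.inter_subset_left h3
    intro v hv
    rw [← h4] at hv
    exact (Finset.mem_inter.mp hv).2
  -- conclude
  intro v hv
  obtain ⟨e, heM, hve⟩ := hv
  by_cases heC : e ∈ C
  · have hvA : v ∈ A := Finset.mem_biUnion.mpr
      ⟨e, Finset.mem_filter.mpr ⟨heC, heM⟩, Finset.mem_filter.mpr ⟨Finset.mem_univ _, hve⟩⟩
    obtain ⟨f, hf, hvf⟩ := Finset.mem_biUnion.mp (hAB hvA)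
    have hfC := Finset.mem_filter.mp hf
    refine ⟨f, ?_, (Finset.mem_filter.mp hvf).2⟩
    exact (hNmem f).mpr (Or.inr ⟨hfC.1, hfC.2⟩)
  · exact ⟨e, (hNmem e).mpr (Or.inl ⟨heM, heC⟩), hve⟩

end Aux

/-- there is a matching of `G` that simultaneously has maximum count
and maximum size. -/
theorem exists_max_count_max_size_matching
    {V : Type*} [Fintype V] (G : SimpleGraph V) (S : Set V) :
    ∃ M : Finset (Sym2 V), IsMatching G M ∧
      (∀ M' : Finset (Sym2 V), IsMatching G M' → matchCount S M' ≤ matchCount S M) ∧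
      (∀ M' : Finset (Sym2 V), IsMatching G M' → M'.card ≤ M.card) := by
  classical
  set B := Fintype.card (Sym2 V) with hB
  set key : Finset (Sym2 V) → ℕ := fun M => matchCount S M * (B + 1) + M.card with hkey
  have hne : (Finset.univ.filter (fun M : Finset (Sym2 V) => IsMatching G M)).Nonempty := by
    refine ⟨∅, Finset.mem_filter.mpr ⟨Finset.mem_univ _, ?_, ?_⟩⟩
    · simp
    · simp
  obtain ⟨M, hMmem, hMmax⟩ := Finset.exists_max_image _ key hne
  have hM : IsMatching G M := (Finset.mem_filter.mp hMmem).2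
  refine ⟨M, hM, ?_, ?_⟩
  · intro M' hM'
    by_contra hlt
    push_neg at hlt
    have hMcard : M.card ≤ B := by
      rw [hB, ← Finset.card_univ]
      exact Finset.card_le_univ M
    have h1 : key M < key M' := by
      have h2 : matchCount S M + 1 ≤ matchCount S M' := hlt
      have h3 : (matchCount S M + 1) * (B + 1) ≤ matchCount S M' * (B + 1) :=
        Nat.mul_le_mul_right _ h2
      have h4 : matchCount S M * (B + 1) + (B + 1) = (matchCount S M + 1) * (B + 1) := by
        ring
      simp only [hkey]
      omega
    have := hMmax M' (Finset.mem_filter.mpr ⟨Finset.mem_univ _, hM'⟩)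
    omega
  · intro M' hM'
    by_contra hlt
    push_neg at hlt
    obtain ⟨N, hN, hNcard, hNmatch⟩ := exists_bigger hM hM' hlt
    have hcount : matchCount S M ≤ matchCount S N := by
      refine Set.ncard_le_ncard ?_ (Set.toFinite _)
      intro v hv
      exact ⟨hv.1, hNmatch v hv.2⟩
    have h1 : key M < key N := by
      simp only [hkey]
      have := Nat.mul_le_mul_right (B + 1) hcount
      omega
    have := hMmax N (Finset.mem_filter.mpr ⟨Finset.mem_univ _, hN⟩)
    omega
end

section
/- Let G be a finite simple graph, M a matching of G, and p = u_0,…,u_t a path in G whose edges alternate between edges not in M and edges in M (first edge not in M) such that both u_0 and u_t are unmatched by M. Then the symmetric difference of M and the edge set of p is a matching of G with exactly one more edge than M that matches every vertex matched by M, together with u_0 and u_t. -/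
open scoped symmDiff

variable {V : Type*}

lemma walk_support_get {G : SimpleGraph V} {a b : V} (p : G.Walk a b) (k : ℕ)
    (h : k < p.support.length) : p.support.get ⟨k, h⟩ = p.getVert k := by
  induction p generalizing k with
  | nil =>
    simp only [SimpleGraph.Walk.support_nil, List.length_singleton] at h
    interval_cases k
    simp [SimpleGraph.Walk.getVert]
  | cons adj q ih =>
    cases k with
    | zero => simp
    | succ k =>
      simp only [SimpleGraph.Walk.support_cons, List.get_cons_succ]
      exact ih k (Nat.lt_of_succ_lt_succ h)

lemma walk_edges_get {G : SimpleGraph V} {a b : V} (p : G.Walk a b) (k : ℕ)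
    (h : k < p.edges.length) :
    p.edges.get ⟨k, h⟩ = s(p.getVert k, p.getVert (k + 1)) := by
  induction p generalizing k with
  | nil => simp at h
  | cons adj q ih =>
    cases k with
    | zero => simp [SimpleGraph.Walk.getVert_cons]
    | succ k =>
      simp only [SimpleGraph.Walk.edges_cons, List.get_cons_succ]
      exact ih k (Nat.lt_of_succ_lt_succ h)

lemma getVert_injOn {G : SimpleGraph V} {a b : V} {p : G.Walk a b} (hp : p.IsPath)
    {k l : ℕ} (hk : k ≤ p.length) (hl : l ≤ p.length)
    (h : p.getVert k = p.getVert l) : k = l := by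
  have hk' : k < p.support.length := by rw [SimpleGraph.Walk.length_support]; omega
  have hl' : l < p.support.length := by rw [SimpleGraph.Walk.length_support]; omega
  have := (List.nodup_iff_injective_get.1 hp.support_nodup)
    (a₁ := ⟨k, hk'⟩) (a₂ := ⟨l, hl'⟩)
    (by rw [walk_support_get, walk_support_get, h])
  exact congrArg Fin.val this

lemma odd_filter_card (n : ℕ) :
    ((Finset.range n).filter (fun k => k % 2 = 1)).card = n / 2 := by
  induction n with
  | zero => simp
  | succ n ih =>
    rw [Finset.range_add_one, Finset.filter_insert]
    by_cases h : n % 2 = 1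
    · rw [if_pos h, Finset.card_insert_of_notMem (by simp)]
      omega
    · rw [if_neg h]
      omega

/-- augmenting along an alternating path between two unmatched vertices
yields a matching with one more edge that matches everything `M` matched, together
with the two endpoints. -/
theorem symmDiff_augmenting_path_matching
    {V : Type*} [DecidableEq V] (G : SimpleGraph V)
    (M : Finset (Sym2 V)) (hM : IsMatching G M)
    {a b : V} (p : G.Walk a b) (hpath : p.IsPath) (hlen : 0 < p.length)
    (halt : Alternating M p) (ha : ¬ Matches M a) (hb : ¬ Matches M b) :
    IsMatching G (M ∆ p.edges.toFinset) ∧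
      (M ∆ p.edges.toFinset).card = M.card + 1 ∧
      (∀ v : V, Matches M v → Matches (M ∆ p.edges.toFinset) v) ∧
      Matches (M ∆ p.edges.toFinset) a ∧ Matches (M ∆ p.edges.toFinset) b := by
  classical
  set P := p.edges.toFinset with hP
  set n := p.length with hn
  set E : ℕ → Sym2 V := fun k => s(p.getVert k, p.getVert (k + 1)) with hE
  have hEn : p.edges.length = n := p.length_edges
  -- basic facts
  have f2 : ∀ k, k < n → (E k ∈ M ↔ k % 2 = 1) := by
    intro k hk
    have hk' : k < p.edges.length := by omega
    have := halt k hk'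
    rwa [walk_edges_get p k hk'] at this
  have f3 : ∀ k, k < n → E k ∈ P := by
    intro k hk
    have hk' : k < p.edges.length := by omega
    have hg : p.edges.get ⟨k, hk'⟩ = E k := walk_edges_get p k hk'
    rw [hP, List.mem_toFinset, ← hg]
    exact List.get_mem _ _
  have f4 : ∀ e, e ∈ P → ∃ k, k < n ∧ e = E k := by
    intro e he
    rw [hP, List.mem_toFinset] at he
    obtain ⟨⟨k, hk⟩, hke⟩ := List.mem_iff_get.1 he
    exact ⟨k, by omega, by rw [← hke, walk_edges_get]⟩
  have finj : ∀ k l, k ≤ n → l ≤ n → p.getVert k = p.getVert l → k = l :=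
    fun k l hk hl h => getVert_injOn hpath hk hl h
  have fmem : ∀ (v : V) (k : ℕ), v ∈ E k ↔ v = p.getVert k ∨ v = p.getVert (k + 1) := by
    intro v k; simp [hE, Sym2.mem_iff]
  -- n is odd
  have hbn : b = p.getVert n := (p.getVert_length).symm
  have hlast : ¬ (E (n - 1) ∈ M) := by
    intro hmem
    have h1 : n - 1 + 1 = n := by omega
    exact hb ⟨E (n - 1), hmem, (fmem _ _).2 (Or.inr (by rw [h1, ← hbn]))⟩
  have hnodd : n % 2 = 1 := by
    have := f2 (n - 1) (by omega)
    have h0 : ¬ ((n - 1) % 2 = 1) := fun h => hlast (this.2 h)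
    omega
  -- matched edges contradiction helper: a vertex getVert k with 0 < k < n that lies in
  -- some e ∈ M with e ∉ P gives a contradiction... we inline instead.
  have hMP : ∀ e ∈ M, e ∉ P → ∀ k, k ≤ n → p.getVert k ∉ e := by
    intro e heM heP k hkn hvk
    by_cases hk0 : k = 0
    · exact ha ⟨e, heM, by rwa [hk0, p.getVert_zero] at hvk⟩
    by_cases hkn' : k = n
    · exact hb ⟨e, heM, by rwa [hkn', ← hbn] at hvk⟩
    -- 0 < k < n; one of edges k-1, k is in M
    have hk1 : k - 1 < n := by omega
    have hkl : k < n := by omega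
    by_cases hpar : k % 2 = 1
    -- edge k ∈ M contains getVert k
    · have hEkM : E k ∈ M := (f2 k hkl).2 hpar
      have hne : e ≠ E k := fun h => heP (h ▸ f3 k hkl)
      exact hM.2 e heM (E k) hEkM hne (p.getVert k) hvk ((fmem _ _).2 (Or.inl rfl))
    · have hodd : (k - 1) % 2 = 1 := by omega
      have hEkM : E (k - 1) ∈ M := (f2 (k - 1) hk1).2 hodd
      have hne : e ≠ E (k - 1) := fun h => heP (h ▸ f3 (k - 1) hk1)
      have h1 : k - 1 + 1 = k := by omega
      exact hM.2 e heM (E (k - 1)) hEkM hne (p.getVert k) hvk ((fmem _ _).2 (Or.inr (by rw [h1])))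
  -- two edges of p sharing a vertex are adjacent
  have hadj : ∀ k l, k < n → l < n → k ≠ l → ∀ v, v ∈ E k → v ∈ E l →
      l = k + 1 ∨ k = l + 1 := by
    intro k l hk hl hkl v hvk hvl
    rcases (fmem v k).1 hvk with h1 | h1 <;> rcases (fmem v l).1 hvl with h2 | h2
    · exact absurd (finj k l (by omega) (by omega) (h1 ▸ h2 ▸ rfl)) hkl
    · have := finj k (l + 1) (by omega) (by omega) (h1 ▸ h2 ▸ rfl); omega
    · have := finj (k + 1) l (by omega) (by omega) (h1 ▸ h2 ▸ rfl); omega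
    · have := finj (k + 1) (l + 1) (by omega) (by omega) (h1 ▸ h2 ▸ rfl); omega
  have hsd : ∀ e, e ∈ M ∆ P ↔ (e ∈ M ∧ e ∉ P) ∨ (e ∈ P ∧ e ∉ M) := by
    intro e; exact Finset.mem_symmDiff
  -- Part 1 : matching
  have part1 : IsMatching G (M ∆ P) := by
    constructor
    · intro e he
      rcases (hsd e).1 he with ⟨h1, _⟩ | ⟨h1, _⟩
      · exact hM.1 h1
      · rw [hP, List.mem_toFinset] at h1
        exact p.edges_subset_edgeSet h1
    · intro e heM f hfM hef v hve hvf
      rcases (hsd e).1 heM with ⟨he1, he2⟩ | ⟨he1, he2⟩ <;>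
        rcases (hsd f).1 hfM with ⟨hf1, hf2⟩ | ⟨hf1, hf2⟩
      · exact hM.2 e he1 f hf1 hef v hve hvf
      · obtain ⟨k, hk, rfl⟩ := f4 f hf1
        rcases (fmem v k).1 hvf with h | h
        · exact hMP e he1 he2 k (by omega) (h ▸ hve)
        · exact hMP e he1 he2 (k + 1) (by omega) (h ▸ hve)
      · obtain ⟨k, hk, rfl⟩ := f4 e he1
        rcases (fmem v k).1 hve with h | h
        · exact hMP f hf1 hf2 k (by omega) (h ▸ hvf)
        · exact hMP f hf1 hf2 (k + 1) (by omega) (h ▸ hvf)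
      · obtain ⟨k, hk, rfl⟩ := f4 e he1
        obtain ⟨l, hl, rfl⟩ := f4 f hf1
        have hkl : k ≠ l := fun h => hef (h ▸ rfl)
        have hek : ¬ (k % 2 = 1) := fun h => he2 ((f2 k hk).2 h)
        have hel : ¬ (l % 2 = 1) := fun h => hf2 ((f2 l hl).2 h)
        rcases hadj k l hk hl hkl v hve hvf with h | h <;> omega
  -- Part 3 : matched vertices stay matched
  have part3 : ∀ v : V, Matches M v → Matches (M ∆ P) v := by
    intro v ⟨e, heM, hve⟩
    by_cases heP : e ∈ P
    · obtain ⟨k, hk, rfl⟩ := f4 e heP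
      have hkodd : k % 2 = 1 := (f2 k hk).1 heM
      rcases (fmem v k).1 hve with h | h
      · -- use edge k - 1
        have hk1 : k - 1 < n := by omega
        have : E (k - 1) ∈ M ∆ P := (hsd _).2 (Or.inr ⟨f3 _ hk1,
          fun hmem => by have := (f2 _ hk1).1 hmem; omega⟩)
        have h1 : k - 1 + 1 = k := by omega
        exact ⟨E (k - 1), this, (fmem _ _).2 (Or.inr (by rw [h1, h]))⟩
      · -- v = getVert (k+1)
        by_cases hkn : k + 1 = n
        · exfalso
          apply hb
          refine ⟨E k, heM, ?_⟩
          rw [hbn, ← hkn]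
          exact (fmem _ _).2 (Or.inr rfl)
        · have hk1 : k + 1 < n := by omega
          have : E (k + 1) ∈ M ∆ P := (hsd _).2 (Or.inr ⟨f3 _ hk1,
            fun hmem => by have := (f2 _ hk1).1 hmem; omega⟩)
          exact ⟨E (k + 1), this, (fmem _ _).2 (Or.inl h)⟩
    · exact ⟨e, (hsd e).2 (Or.inl ⟨heM, heP⟩), hve⟩
  -- endpoints matched
  have h0n : (0:ℕ) < n := hlen
  have hE0 : E 0 ∈ M ∆ P := (hsd _).2 (Or.inr ⟨f3 0 h0n,
    fun hmem => by have := (f2 0 h0n).1 hmem; omega⟩)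
  have parta : Matches (M ∆ P) a :=
    ⟨E 0, hE0, (fmem _ _).2 (Or.inl (p.getVert_zero).symm)⟩
  have hEn1 : E (n - 1) ∈ M ∆ P := (hsd _).2 (Or.inr ⟨f3 (n-1) (by omega),
    fun hmem => by have := (f2 (n-1) (by omega)).1 hmem; omega⟩)
  have partb : Matches (M ∆ P) b :=
    ⟨E (n - 1), hEn1, (fmem _ _).2 (Or.inr (by
      have h1 : n - 1 + 1 = n := by omega
      rw [h1, ← hbn]))⟩
  -- Part 2 : cardinality
  have hPn : P.card = n := by
    rw [hP, List.toFinset_card_of_nodup hpath.edges_nodup, hEn]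
  have hEinjOn : Set.InjOn E (Finset.range n : Set ℕ) := by
    intro k hk l hl h
    simp only [Finset.coe_range, Set.mem_Iio] at hk hl
    rcases (fmem (p.getVert k) l).1 (h ▸ (fmem _ k).2 (Or.inl rfl)) with h1 | h1
    · exact finj k l (by omega) (by omega) h1
    · have hkl := finj k (l + 1) (by omega) (by omega) h1
      rcases (fmem (p.getVert (k+1)) l).1 (h ▸ (fmem _ k).2 (Or.inr rfl)) with h2 | h2
      · have := finj (k + 1) l (by omega) (by omega) h2; omega
      · have := finj (k + 1) (l + 1) (by omega) (by omega) h2; omega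
  have hPM : P ∩ M = ((Finset.range n).filter (fun k => k % 2 = 1)).image E := by
    ext e
    simp only [Finset.mem_inter, Finset.mem_image, Finset.mem_filter, Finset.mem_range]
    constructor
    · rintro ⟨heP, heM⟩
      obtain ⟨k, hk, rfl⟩ := f4 e heP
      exact ⟨k, ⟨hk, (f2 k hk).1 heM⟩, rfl⟩
    · rintro ⟨k, ⟨hk, hko⟩, rfl⟩
      exact ⟨f3 k hk, (f2 k hk).2 hko⟩
  have hPMcard : (P ∩ M).card = n / 2 := by
    rw [hPM, Finset.card_image_of_injOn (hEinjOn.mono (by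
      intro x hx
      simp only [Finset.coe_filter, Set.mem_setOf_eq] at hx
      simp only [Finset.coe_range, Set.mem_Iio]
      exact (Finset.mem_range.1 hx.1)))]
    exact odd_filter_card n
  have hcard : (M ∆ P).card = M.card + 1 := by
    have hdisj : Disjoint (M \ P) (P \ M) :=
      Finset.disjoint_left.2 fun e he1 he2 => (Finset.mem_sdiff.1 he2).2 (Finset.mem_sdiff.1 he1).1
    have h1 : (M ∆ P).card = (M \ P).card + (P \ M).card := by
      rw [symmDiff_def, Finset.sup_eq_union, Finset.card_union_of_disjoint hdisj]
    have h2 : (M ∩ P).card + (M \ P).card = M.card := Finset.card_inter_add_card_sdiff M P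
    have h3 : (P ∩ M).card + (P \ M).card = P.card := Finset.card_inter_add_card_sdiff P M
    have h4 : (M ∩ P).card = (P ∩ M).card := by rw [Finset.inter_comm]
    omega
  exact ⟨part1, hcard, part3, parta, partb⟩
end
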